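/- arXiv:math/0111130 — 5 statements merged into one kernel-verified Lean document; each statement's English description precedes it below -/
import Mathlib

section
/- Let q^{1/4} be a primitive 4N-th root of unity, γ(x) = q^{x²/4} for x ∈ Z/2NZ, and τ = Σ_{j=0}^{2N-1} q^{j²/4}. Then F₊(γ) = τ γ^{-1}, where F₊(f)(λ) = Σ_{x=0}^{2N-1} q^{xλ/2} f(x). Consequently τ · conj(τ) = 2N when q^{1/4} = e^{πi/2N}. -/
/-- The Fourier transform `F₊` on functions on `ℤ/2Nℤ`, with respect to
`ζ = q^{1/2}`: `F₊(f)(λ) = Σ_{x=0}^{2N-1} ζ^{xλ} f(x)`. -/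
noncomputable def Fplus (N : ℕ) (ζ : ℂ) (f : ZMod (2*N) → ℂ) (l : ZMod (2*N)) : ℂ :=
  ∑ x ∈ Finset.range (2*N), ζ ^ (x * l.val) * f x

/-! Completing the square, `ξ^{l²} · (ξ²)^{xl} · ξ^{x²} = ξ^{(x+l)²}`, and since `ξ^{4N} = 1` the
function `x ↦ ξ^{x²}` has period `2N`; so `γ(λ) · F₊(γ)(λ)` is a translate of the Gauss sum `τ`,
hence equal to `τ`. As `|ξ| = 1`, `conj τ = Σ_λ γ(λ)⁻¹`, so
`τ · conj τ = Σ_λ F₊(γ)(λ) = Σ_x γ(x) Σ_λ (ξ^{2x})^λ`, and orthogonality of the `2N`-th roots of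
unity leaves only the term `x = 0`, which is `2N`. -/

open Finset

section Periodicity

variable {M : Type*} [Monoid M] {ξ : M} {N : ℕ}

theorem pow_sq_eq_pow_sq_mod (hξ : ξ ^ (4 * N) = 1) (a : ℕ) :
    ξ ^ (a ^ 2) = ξ ^ ((a % (2 * N)) ^ 2) := by
  set r := a % (2 * N)
  set t := a / (2 * N)
  have hsq : a ^ 2 = r ^ 2 + 4 * N * (r * t + N * t ^ 2) := by
    rw [← Nat.mod_add_div a (2 * N)]; ring
  rw [hsq, pow_add, pow_mul, hξ, one_pow, mul_one]

theorem pow_val_natCast_sq (hξ : ξ ^ (4 * N) = 1) (a : ℕ) :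
    ξ ^ ((a : ZMod (2 * N)).val ^ 2) = ξ ^ (a ^ 2) := by
  rw [ZMod.val_natCast, ← pow_sq_eq_pow_sq_mod hξ]

end Periodicity

theorem ZMod.sum_range_natCast {R : Type*} [AddCommMonoid R] (n : ℕ) [NeZero n]
    (g : ZMod n → R) : ∑ x ∈ range n, g x = ∑ y, g y :=
  sum_nbij' (↑) ZMod.val (fun _ _ => mem_univ _) (fun y _ => mem_range.mpr y.val_lt)
    (fun _ hx => ZMod.val_cast_of_lt (mem_range.mp hx)) (fun y _ => ZMod.natCast_zmod_val y)
    (fun _ _ => rfl)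

section GaussSum

variable {R : Type*} [CommSemiring R] {ξ : R} {N : ℕ}

def quadGaussSum (ξ : R) (N : ℕ) : R := ∑ j ∈ range (2 * N), ξ ^ (j ^ 2)

theorem sum_range_pow_add_sq [NeZero N] (hξ : ξ ^ (4 * N) = 1) (l : ℕ) :
    ∑ x ∈ range (2 * N), ξ ^ ((x + l) ^ 2) = quadGaussSum ξ N := by
  let γ : ZMod (2 * N) → R := fun y => ξ ^ (y.val ^ 2)
  calc ∑ x ∈ range (2 * N), ξ ^ ((x + l) ^ 2)
      = ∑ x ∈ range (2 * N), γ (x + l) := by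
        simp only [γ, ← Nat.cast_add, pow_val_natCast_sq hξ]
    _ = ∑ y, γ (y + l) := ZMod.sum_range_natCast _ fun y => γ (y + (l : ZMod (2 * N)))
    _ = ∑ y, γ y := Fintype.sum_equiv (Equiv.addRight _) _ _ fun _ => rfl
    _ = quadGaussSum ξ N := by
        simp only [quadGaussSum, ← ZMod.sum_range_natCast, γ, pow_val_natCast_sq hξ]

theorem pow_sq_mul_sum_range [NeZero N] (hξ : ξ ^ (4 * N) = 1) (l : ℕ) :
    ξ ^ (l ^ 2) * ∑ x ∈ range (2 * N), (ξ ^ 2) ^ (x * l) * ξ ^ (x ^ 2) = quadGaussSum ξ N := by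
  rw [mul_sum, ← sum_range_pow_add_sq hξ l]
  refine sum_congr rfl fun x _ => ?_
  rw [← pow_mul, ← pow_add, ← pow_add]
  ring_nf

end GaussSum

theorem IsPrimitiveRoot.sum_range_pow_mul_eq_zero {R : Type*} [CommRing R] [IsDomain R]
    {ζ : R} {n x : ℕ} (hζ : IsPrimitiveRoot ζ n) (hx0 : x ≠ 0) (hxn : x < n) :
    ∑ k ∈ range n, ζ ^ (x * k) = 0 := by
  have hne : 1 - ζ ^ x ≠ 0 := sub_ne_zero.mpr (hζ.pow_ne_one_of_pos_of_lt hx0 hxn).symm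
  refine (mul_eq_zero.mp ?_).resolve_left hne
  simp_rw [pow_mul]
  rw [mul_neg_geom_sum, ← pow_mul, mul_comm, pow_mul, hζ.pow_eq_one, one_pow, sub_self]

theorem Fplus_pow_sq {N : ℕ} [NeZero N] {ξ : ℂ} (hξ : ξ ^ (4 * N) = 1) (l : ZMod (2 * N)) :
    Fplus N (ξ ^ 2) (fun x => ξ ^ (x.val ^ 2)) l = quadGaussSum ξ N * (ξ ^ (l.val ^ 2))⁻¹ := by
  have hξ0 : ξ ≠ 0 := by rintro rfl; simp [NeZero.ne N] at hξ
  rw [eq_mul_inv_iff_mul_eq₀ (pow_ne_zero _ hξ0), Fplus, mul_comm]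
  simp only [pow_val_natCast_sq hξ]
  exact pow_sq_mul_sum_range hξ _

theorem quadGaussSum_mul_conj {N : ℕ} [NeZero N] {ξ : ℂ} (hξ : IsPrimitiveRoot ξ (4 * N)) :
    quadGaussSum ξ N * starRingEnd ℂ (quadGaussSum ξ N) = 2 * N := by
  have h4N : 4 * N ≠ 0 := by simp [NeZero.ne N]
  have hξ0 : ξ ≠ 0 := hξ.ne_zero h4N
  have hξ2 : IsPrimitiveRoot (ξ ^ 2) (2 * N) := hξ.pow (by omega) (by ring)
  have hconj : starRingEnd ℂ ξ = ξ⁻¹ := (Complex.inv_eq_conj (hξ.norm'_eq_one h4N)).symm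
  calc quadGaussSum ξ N * starRingEnd ℂ (quadGaussSum ξ N)
      = ∑ l ∈ range (2 * N), quadGaussSum ξ N * (ξ ^ (l ^ 2))⁻¹ := by
        simp only [quadGaussSum, map_sum, map_pow, hconj, inv_pow, mul_sum]
    _ = ∑ l ∈ range (2 * N), ∑ x ∈ range (2 * N), (ξ ^ 2) ^ (x * l) * ξ ^ (x ^ 2) := by
        refine sum_congr rfl fun l _ => ?_
        rw [← pow_sq_mul_sum_range hξ.pow_eq_one l, mul_comm, ← mul_assoc,
          inv_mul_cancel₀ (pow_ne_zero _ hξ0), one_mul]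
    _ = ∑ x ∈ range (2 * N), ξ ^ (x ^ 2) * ∑ l ∈ range (2 * N), (ξ ^ 2) ^ (x * l) := by
        rw [sum_comm]
        simp only [mul_sum, mul_comm]
    _ = ξ ^ (0 ^ 2) * ∑ l ∈ range (2 * N), (ξ ^ 2) ^ (0 * l) := by
        refine sum_eq_single_of_mem 0 (by simp [NeZero.pos N]) fun x hx hx0 => ?_
        rw [hξ2.sum_range_pow_mul_eq_zero hx0 (mem_range.mp hx), mul_zero]
    _ = 2 * N := by simp

/-- Let `ξ = q^{1/4}` be a primitive `4N`-th root of unity, `γ(x) = ξ^{x²}` (that is,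
`q^{x²/4}`) on `ℤ/2Nℤ`, and `τ = Σ_{j=0}^{2N-1} ξ^{j²}`. Then `F₊(γ) = τ·γ⁻¹`
(with `q^{1/2} = ξ²`), and consequently `τ·conj(τ) = 2N` when `ξ = e^{πi/2N}`. -/
theorem gauss_sum_eigenvector (N : ℕ) (hN : 1 ≤ N) (ξ : ℂ)
    (hξ : IsPrimitiveRoot ξ (4*N)) :
    (∀ l : ZMod (2*N),
      Fplus N (ξ^2) (fun x => ξ ^ (x.val^2)) l
        = (∑ j ∈ Finset.range (2*N), ξ ^ (j^2)) * (ξ ^ (l.val^2))⁻¹) ∧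
    (ξ = Complex.exp (Real.pi * Complex.I / (2*N)) →
      (∑ j ∈ Finset.range (2*N), ξ ^ (j^2)) *
        (starRingEnd ℂ) (∑ j ∈ Finset.range (2*N), ξ ^ (j^2)) = 2*N) := by
  have : NeZero N := ⟨by omega⟩
  exact ⟨Fplus_pow_sq hξ.pow_eq_one, fun _ => quadGaussSum_mul_conj hξ⟩
end

section
/- Recursion for the constant term: with μ_k as above and CT the constant term functional, CT(μ_{k+1}) = ((1-q^{2k+1})(1-q^{2k+2})/(1-q^{k+1})²) · CT(μ_k). -/
/-!
Write `μ(z) = (z;q)_∞ (q/z;q)_∞ / ((tz;q)_∞ (tq/z;q)_∞)`, so that `CT(μ) = (2πi)⁻¹ M₋₁` with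
`Mₙ = ∮_{|z|=1} zⁿ μ(z) dz`. The function `μ` is holomorphic on the annulus `q ≤ |z| ≤ 1` and
satisfies the `q`-difference equation `(z - t) μ(qz) = -(1 - tz) μ(z)`. Moving the contour of
`zⁿ (z - tq) μ(z)` from `|z| = 1` to `|z| = q` and substituting `z ↦ qz` therefore gives
`Mₙ₊₁ - tq Mₙ = -qⁿ⁺² (Mₙ - t Mₙ₊₁)`; for `n = -1, -2` this expresses `M₀` and `M₋₂` through `M₋₁`.
Finally `t ↦ tq` multiplies `μ` by `(1 - tz)(1 - tq/z)`, so the new `M₋₁` is a combination of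
`M₋₂, M₋₁, M₀`, hence a multiple of the old `M₋₁`.
-/

/-- The truncated theta function `μ` written on the unit circle: with `X = e^{iθ}`
standing for `q^{2x}` and `t = q^k`,
`μ(θ) = Π_{j=0}^∞ (1 - X q^j)(1 - X⁻¹ q^{j+1}) / ((1 - X t q^j)(1 - X⁻¹ t q^{j+1}))`. -/
noncomputable def muProd (q : ℝ) (t : ℂ) (θ : ℝ) : ℂ :=
  ∏' j : ℕ,
    ((1 - Complex.exp (Complex.I * θ) * (q:ℂ)^j) *
     (1 - Complex.exp (-(Complex.I * θ)) * (q:ℂ)^(j+1))) /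
    ((1 - Complex.exp (Complex.I * θ) * t * (q:ℂ)^j) *
     (1 - Complex.exp (-(Complex.I * θ)) * t * (q:ℂ)^(j+1)))

/-- The constant term of `μ`, as the average of `μ` over the unit circle. -/
noncomputable def muCT (q : ℝ) (t : ℂ) : ℂ :=
  (2 * Real.pi : ℂ)⁻¹ * ∫ θ in (0:ℝ)..(2*Real.pi), muProd q t θ

open Complex Metric
open scoped Real

/-- `qPochhammer a q` is `(a; q)_∞`. -/
noncomputable def qPochhammer (a q : ℂ) : ℂ := ∏' j : ℕ, (1 - a * q ^ j)

lemma one_sub_ne_zero_of_norm_lt_one {R : Type*} [SeminormedRing R] [NormOneClass R] {x : R}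
    (hx : ‖x‖ < 1) : 1 - x ≠ 0 :=
  sub_ne_zero.2 fun h => by simp [← h] at hx

lemma norm_mul_lt_one {R : Type*} [SeminormedRing R] {x y : R} (hx : ‖x‖ < 1) (hy : ‖y‖ ≤ 1) :
    ‖x * y‖ < 1 :=
  (norm_mul_le x y).trans_lt (mul_lt_one_of_nonneg_of_lt_one_left (norm_nonneg x) hx hy)

section qPochhammer

variable {a q : ℂ}

lemma summable_norm_mul_pow (a : ℂ) (hq : ‖q‖ < 1) : Summable fun j : ℕ => ‖a * q ^ j‖ := by
  simpa [norm_mul, norm_pow] using (summable_geometric_of_lt_one (norm_nonneg q) hq).mul_left ‖a‖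

lemma multipliable_one_sub_mul_pow (a : ℂ) (hq : ‖q‖ < 1) :
    Multipliable fun j : ℕ => 1 - a * q ^ j := by
  simpa [sub_eq_add_neg] using multipliable_one_add_of_summable (f := fun j => -(a * q ^ j))
    (by simpa using summable_norm_mul_pow a hq)

lemma qPochhammer_eq_one_sub_mul (a : ℂ) (hq : ‖q‖ < 1) :
    qPochhammer a q = (1 - a) * qPochhammer (a * q) q := by
  have hshift (j : ℕ) : a * q ^ (j + 1) = a * q * q ^ j := by ring
  unfold qPochhammer
  rw [tprod_eq_zero_mul' (by simpa only [hshift] using multipliable_one_sub_mul_pow (a * q) hq)]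
  simp only [pow_zero, mul_one, hshift]

lemma qPochhammer_ne_zero (hq : ‖q‖ < 1) (ha : ‖a‖ < 1) : qPochhammer a q ≠ 0 := by
  have hfac (j : ℕ) : ‖a * q ^ j‖ < 1 :=
    norm_mul_lt_one ha (by simpa using pow_le_one₀ (norm_nonneg q) hq.le)
  unfold qPochhammer
  simpa [sub_eq_add_neg] using tprod_one_add_ne_zero_of_summable (f := fun j => -(a * q ^ j))
    (fun j => by simpa [← sub_eq_add_neg] using one_sub_ne_zero_of_norm_lt_one (hfac j))
    (by simpa using summable_norm_mul_pow a hq)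

lemma differentiable_qPochhammer (hq : ‖q‖ < 1) : Differentiable ℂ fun a => qPochhammer a q := by
  intro a
  have hlim := ((summable_geometric_of_lt_one (norm_nonneg q) hq).mul_left (‖a‖ + 1))
    |>.hasProdLocallyUniformlyOn_nat_one_add (f := fun j (b : ℂ) => -(b * q ^ j)) isOpen_ball
    (.of_forall fun j b hb => by
      rw [norm_neg, norm_mul, norm_pow]
      exact mul_le_mul_of_nonneg_right (by simpa using (mem_ball_zero_iff.1 hb).le) (by positivity))
    (fun j => by fun_prop)
  simp only [← sub_eq_add_neg] at hlim
  exact (hlim.differentiableOn (.of_forall fun s => by fun_prop) isOpen_ball).differentiableAt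
    (isOpen_ball.mem_nhds (by simp))

end qPochhammer

noncomputable def mu (q t z : ℂ) : ℂ :=
  qPochhammer z q * qPochhammer (z⁻¹ * q) q /
    (qPochhammer (t * z) q * qPochhammer (t * z⁻¹ * q) q)

section mu

variable {q t z : ℂ}

lemma tprod_div_eq_qPochhammer (hq : ‖q‖ < 1) {a b c d : ℂ}
    (hcd : qPochhammer c q * qPochhammer d q ≠ 0) :
    ∏' j : ℕ, (1 - a * q ^ j) * (1 - b * q ^ j) / ((1 - c * q ^ j) * (1 - d * q ^ j)) =
      qPochhammer a q * qPochhammer b q / (qPochhammer c q * qPochhammer d q) := by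
  have hmul (a b : ℂ) :
      ∏' j : ℕ, (1 - a * q ^ j) * (1 - b * q ^ j) = qPochhammer a q * qPochhammer b q :=
    (multipliable_one_sub_mul_pow a hq).tprod_mul (multipliable_one_sub_mul_pow b hq)
  rw [Multipliable.tprod_div₀, hmul, hmul]
  · exact (multipliable_one_sub_mul_pow a hq).mul (multipliable_one_sub_mul_pow b hq)
  · exact (multipliable_one_sub_mul_pow c hq).mul (multipliable_one_sub_mul_pow d hq)
  · rwa [hmul]

lemma mu_qdifference (hq : ‖q‖ < 1) (hq0 : q ≠ 0) (ht : ‖t‖ < 1) (hz : ‖z‖ = 1) :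
    (z - t) * mu q t (z * q) = -(1 - t * z) * mu q t z := by
  have hz0 : z ≠ 0 := norm_ne_zero_iff.1 (by simp [hz])
  have hzi : ‖z⁻¹‖ = 1 := by simp [hz]
  have hC := qPochhammer_ne_zero hq (norm_mul_lt_one (norm_mul_lt_one ht hz.le) hq.le)
  have hD := qPochhammer_ne_zero hq (norm_mul_lt_one (norm_mul_lt_one ht hzi.le) hq.le)
  have h1 := one_sub_ne_zero_of_norm_lt_one (norm_mul_lt_one ht hz.le)
  have h2 := one_sub_ne_zero_of_norm_lt_one (norm_mul_lt_one ht hzi.le)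
  have e1 : (z * q)⁻¹ * q = z⁻¹ := by field_simp
  have e2 : t * (z * q)⁻¹ * q = t * z⁻¹ := by field_simp
  rw [mu, mu, e1, e2, ← mul_assoc, qPochhammer_eq_one_sub_mul z hq,
    qPochhammer_eq_one_sub_mul z⁻¹ hq, qPochhammer_eq_one_sub_mul (t * z) hq,
    qPochhammer_eq_one_sub_mul (t * z⁻¹) hq]
  have h3 : z - t ≠ 0 := sub_ne_zero.2 fun h => by simp [← h, hz] at ht
  generalize qPochhammer (z * q) q = A
  generalize qPochhammer (z⁻¹ * q) q = B
  generalize qPochhammer (t * z * q) q = C at *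
  generalize qPochhammer (t * z⁻¹ * q) q = D at *
  rw [mul_comm t z] at h1
  field_simp
  ring

lemma mu_param_mul (hq : ‖q‖ < 1) (ht : ‖t‖ < 1) (hz : ‖z‖ = 1) :
    mu q (t * q) z = (1 - t * z) * (1 - t * z⁻¹ * q) * mu q t z := by
  have hzq : ‖z⁻¹ * q‖ ≤ 1 := by simpa [hz] using hq.le
  have hC := qPochhammer_ne_zero hq (norm_mul_lt_one (norm_mul_lt_one ht hz.le) hq.le)
  have hD := qPochhammer_ne_zero (a := t * z⁻¹ * q * q) hq
    (norm_mul_lt_one (norm_mul_lt_one (norm_mul_lt_one ht (by simp [hz])) hq.le) hq.le)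
  have h1 := one_sub_ne_zero_of_norm_lt_one (norm_mul_lt_one ht hz.le)
  have h2 : 1 - t * z⁻¹ * q ≠ 0 := by
    simpa only [mul_assoc] using one_sub_ne_zero_of_norm_lt_one (norm_mul_lt_one ht hzq)
  have e1 : t * q * z = t * z * q := by ring
  have e2 : t * q * z⁻¹ * q = t * z⁻¹ * q * q := by ring
  rw [mu, mu, e1, e2, qPochhammer_eq_one_sub_mul (t * z) hq,
    qPochhammer_eq_one_sub_mul (t * z⁻¹ * q) hq]
  generalize qPochhammer (t * z * q) q = C at *
  generalize qPochhammer (t * z⁻¹ * q * q) q = D at *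
  generalize qPochhammer z q * qPochhammer (z⁻¹ * q) q = N
  generalize 1 - t * z = u at *
  generalize 1 - t * z⁻¹ * q = v at *
  field_simp

lemma differentiableAt_mu (hq : ‖q‖ < 1) (hz : z ≠ 0) (h1 : ‖t * z‖ < 1)
    (h2 : ‖t * z⁻¹ * q‖ < 1) : DifferentiableAt ℂ (mu q t) z := by
  have hP := differentiable_qPochhammer hq
  have hinv : DifferentiableAt ℂ (fun w : ℂ => w⁻¹) z := differentiableAt_inv hz
  exact (((hP z).comp z differentiableAt_id).mul ((hP _).comp z (hinv.mul_const q))).div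
    (((hP _).comp z (differentiableAt_id.const_mul t)).mul
      ((hP _).comp z ((hinv.const_mul t).mul_const q)))
    (mul_ne_zero (qPochhammer_ne_zero hq h1) (qPochhammer_ne_zero hq h2))

end mu

lemma circleIntegral_zero_rescale (R : ℝ) (f : ℂ → ℂ) :
    (∮ z in C(0, R), f z) = ∮ z in C(0, 1), R * f (R * z) := by
  simp only [circleIntegral, deriv_circleMap, circleMap_zero, smul_eq_mul, ofReal_one, one_mul]
  congr 1 with θ
  ring

lemma circleIntegral_inv_mul_eq_integral (f : ℂ → ℂ) :
    (∮ z in C(0, 1), z⁻¹ * f z) = I * ∫ θ in (0 : ℝ)..2 * π, f (circleMap 0 1 θ) := by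
  rw [← intervalIntegral.integral_const_mul]
  simp only [circleIntegral, deriv_circleMap, smul_eq_mul]
  congr 1 with θ
  have h : circleMap 0 1 θ ≠ 0 := circleMap_ne_center one_ne_zero
  field_simp

lemma muProd_eq_mu {q : ℝ} {t : ℂ} (hq : |q| < 1) (ht : ‖t‖ < 1) (θ : ℝ) :
    muProd q t θ = mu q t (circleMap 0 1 θ) := by
  have hq' : ‖(q : ℂ)‖ < 1 := by simpa using hq
  set z := circleMap 0 1 θ
  have hz : ‖z‖ = 1 := by simp [z]
  have hz' : exp (I * θ) = z := by simp [z, circleMap_zero, mul_comm]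
  have hzi : exp (-(I * θ)) = z⁻¹ := by rw [exp_neg, hz']
  rw [muProd, hz', hzi, mu, ← tprod_div_eq_qPochhammer hq']
  · congr 1 with j
    ring
  · exact mul_ne_zero (qPochhammer_ne_zero hq' (norm_mul_lt_one ht hz.le))
      (qPochhammer_ne_zero hq' (norm_mul_lt_one (norm_mul_lt_one ht (by simp [hz])) hq'.le))

noncomputable def muMoment (q t : ℂ) (n : ℤ) : ℂ := ∮ z in C(0, 1), z ^ n * mu q t z

section muMoment

variable {q t : ℂ}

lemma circleIntegrable_zpow_mul_mu (hq : ‖q‖ < 1) (ht : ‖t‖ < 1) (n : ℤ) :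
    CircleIntegrable (fun z => z ^ n * mu q t z) 0 1 := by
  refine ContinuousOn.circleIntegrable zero_le_one fun z hz => ?_
  have hz1 : ‖z‖ = 1 := by simpa using hz
  have hz0 : z ≠ 0 := norm_ne_zero_iff.1 (by simp [hz1])
  refine ((differentiableAt_zpow.2 (Or.inl hz0)).mul
    (differentiableAt_mu hq hz0 (norm_mul_lt_one ht hz1.le) ?_)).continuousAt.continuousWithinAt
  exact norm_mul_lt_one (norm_mul_lt_one ht (by simp [hz1])) hq.le

lemma circleIntegral_zpow_mul_quadratic_mul_mu (hq : ‖q‖ < 1) (ht : ‖t‖ < 1) (n : ℤ)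
    (a b c : ℂ) :
    (∮ z in C(0, 1), z ^ n * (a + b * z + c * z ^ 2) * mu q t z) =
      a * muMoment q t n + b * muMoment q t (n + 1) + c * muMoment q t (n + 2) := by
  have hM (k : ℤ) (a : ℂ) : CircleIntegrable (fun z => a * (z ^ k * mu q t z)) 0 1 :=
    (circleIntegrable_zpow_mul_mu hq ht k).const_mul a
  calc (∮ z in C(0, 1), z ^ n * (a + b * z + c * z ^ 2) * mu q t z)
      = ∮ z in C(0, 1), (a * (z ^ n * mu q t z) + b * (z ^ (n + 1) * mu q t z)) +
          c * (z ^ (n + 2) * mu q t z) := by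
        refine circleIntegral.integral_congr zero_le_one fun z hz => ?_
        have hz0 : z ≠ 0 := norm_ne_zero_iff.1 (by simp_all)
        simp only [zpow_add₀ hz0, zpow_one, zpow_two]
        ring
    _ = _ := by
        rw [circleIntegral.integral_add ((hM n a).fun_add (hM _ b)) (hM _ c),
          circleIntegral.integral_add (hM n a) (hM _ b)]
        simp only [circleIntegral.integral_const_mul, muMoment]

lemma muMoment_param_mul (hq : ‖q‖ < 1) (ht : ‖t‖ < 1) :
    muMoment q (t * q) (-1) =
      (1 + t ^ 2 * q) * muMoment q t (-1) - t * muMoment q t 0 - t * q * muMoment q t (-2) := by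
  have h := circleIntegral_zpow_mul_quadratic_mul_mu hq ht (-2) (-(t * q)) (1 + t ^ 2 * q) (-t)
  rw [show (-2 : ℤ) + 1 = -1 by norm_num, show (-2 : ℤ) + 2 = 0 by norm_num] at h
  calc muMoment q (t * q) (-1)
      = ∮ z in C(0, 1), z ^ (-2 : ℤ) * (-(t * q) + (1 + t ^ 2 * q) * z + -t * z ^ 2) *
          mu q t z := by
        refine circleIntegral.integral_congr zero_le_one fun z hz => ?_
        have hz1 : ‖z‖ = 1 := by simpa using hz
        have hz0 : z ≠ 0 := norm_ne_zero_iff.1 (by simp [hz1])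
        rw [mu_param_mul hq ht hz1]
        field_simp
        ring
    _ = _ := by rw [h]; ring

end muMoment

section contour

variable {q : ℝ} {t : ℂ}

lemma differentiableAt_zpow_mul_sub_mul_mu (hq0 : 0 < q) (hq1 : q < 1) (ht : ‖t‖ < 1) (n : ℤ) {z : ℂ}
    (hz1 : ‖z‖ ≤ 1) (hzq : q ≤ ‖z‖) :
    DifferentiableAt ℂ (fun w => w ^ n * (w - t * q) * mu q t w) z := by
  have hz0 : z ≠ 0 := norm_pos_iff.1 (hq0.trans_le hzq)
  have hq : ‖(q : ℂ)‖ < 1 := by simpa [abs_of_pos hq0] using hq1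
  have h2 : ‖z⁻¹ * q‖ ≤ 1 := by
    rw [norm_mul, norm_inv, norm_real, Real.norm_of_nonneg hq0.le]
    exact inv_mul_le_one_of_le₀ hzq (hq0.trans_le hzq).le
  exact ((differentiableAt_zpow.2 (Or.inl hz0)).mul (differentiableAt_id.sub_const _)).mul
    (differentiableAt_mu hq hz0 (norm_mul_lt_one ht hz1)
      (by simpa only [mul_assoc] using norm_mul_lt_one ht h2))

lemma circleIntegral_zpow_mul_sub_mul_mu (hq0 : 0 < q) (hq1 : q < 1) (ht : ‖t‖ < 1) (n : ℤ) :
    (∮ z in C(0, 1), z ^ n * (z - t * q) * mu q t z) =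
      -(q : ℂ) ^ (n + 2) * ∮ z in C(0, 1), z ^ n * (1 - t * z) * mu q t z := by
  have hd {z : ℂ} := differentiableAt_zpow_mul_sub_mul_mu hq0 hq1 ht n (z := z)
  have hq : ‖(q : ℂ)‖ < 1 := by simpa [abs_of_pos hq0] using hq1
  have hq0' : (q : ℂ) ≠ 0 := ofReal_ne_zero.2 hq0.ne'
  calc (∮ z in C(0, 1), z ^ n * (z - t * q) * mu q t z)
      = ∮ z in C(0, q), z ^ n * (z - t * q) * mu q t z := by
        refine circleIntegral_eq_of_differentiable_on_annulus_off_countable hq0 hq1.le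
          Set.countable_empty (fun z hz => ?_) (fun z hz => ?_)
        · simp only [Set.mem_sdiff, mem_closedBall, mem_ball, dist_zero_right, not_lt] at hz
          exact (hd hz.1 hz.2).continuousAt.continuousWithinAt
        · simp only [Set.mem_sdiff, mem_closedBall, mem_ball, dist_zero_right, not_le,
            Set.mem_empty_iff_false, not_false_eq_true, and_true] at hz
          exact hd hz.1.le hz.2.le
    _ = ∮ z in C(0, 1), q * ((q * z) ^ n * (q * z - t * q) * mu q t (q * z)) :=
        circleIntegral_zero_rescale _ _
    _ = ∮ z in C(0, 1), -(q : ℂ) ^ (n + 2) * (z ^ n * (1 - t * z) * mu q t z) := by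
        refine circleIntegral.integral_congr zero_le_one fun z hz => ?_
        have hz1 : ‖z‖ = 1 := by simpa using hz
        rw [zpow_add₀ hq0', zpow_two, mul_comm (q : ℂ) z, mul_zpow]
        linear_combination (z ^ n * (q : ℂ) ^ n * q * q) * mu_qdifference hq hq0' ht hz1
    _ = _ := circleIntegral.integral_const_mul _ _ _ _

lemma muMoment_succ_sub (hq0 : 0 < q) (hq1 : q < 1) (ht : ‖t‖ < 1) (n : ℤ) :
    muMoment q t (n + 1) - t * q * muMoment q t n =
      -(q : ℂ) ^ (n + 2) * (muMoment q t n - t * muMoment q t (n + 1)) := by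
  have hq : ‖(q : ℂ)‖ < 1 := by simpa [abs_of_pos hq0] using hq1
  have hL : (∮ z in C(0, 1), z ^ n * (z - t * q) * mu q t z) =
      -(t * q) * muMoment q t n + 1 * muMoment q t (n + 1) + 0 * muMoment q t (n + 2) := by
    rw [← circleIntegral_zpow_mul_quadratic_mul_mu hq ht]
    congr 1 with z
    ring
  have hR : (∮ z in C(0, 1), z ^ n * (1 - t * z) * mu q t z) =
      1 * muMoment q t n + -t * muMoment q t (n + 1) + 0 * muMoment q t (n + 2) := by
    rw [← circleIntegral_zpow_mul_quadratic_mul_mu hq ht]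
    congr 1 with z
    ring
  have h := circleIntegral_zpow_mul_sub_mul_mu hq0 hq1 ht n
  rw [hL, hR] at h
  linear_combination h

end contour

lemma muCT_eq_muMoment {q : ℝ} {t : ℂ} (hq : |q| < 1) (ht : ‖t‖ < 1) :
    muCT q t = (2 * π * I)⁻¹ * muMoment q t (-1) := by
  simp only [muCT, muMoment, zpow_neg_one, circleIntegral_inv_mul_eq_integral,
    intervalIntegral.integral_congr fun θ _ => muProd_eq_mu hq ht θ]
  field_simp

/-- Written with `t = q^k`, so that `k ↦ k+1` is `t ↦ tq`. -/
theorem constant_term_recursion (q : ℝ) (hq0 : 0 < q) (hq1 : q < 1)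
    (t : ℂ) (ht : ‖t‖ < 1) :
    muCT q (t * q)
      = ((1 - t^2 * (q:ℂ)) * (1 - t^2 * (q:ℂ)^2) / (1 - t * (q:ℂ))^2) * muCT q t := by
  have hq : |q| < 1 := by rwa [abs_of_pos hq0]
  have hqC : ‖(q : ℂ)‖ < 1 := by simpa using hq
  have htq : ‖t * q‖ < 1 := norm_mul_lt_one ht hqC.le
  have hM0 := muMoment_succ_sub hq0 hq1 ht (-1)
  have hM1 := muMoment_succ_sub hq0 hq1 ht (-2)
  norm_num at hM0 hM1
  rw [muCT_eq_muMoment hq htq, muCT_eq_muMoment hq ht, muMoment_param_mul hqC ht,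
    div_mul_eq_mul_div, eq_div_iff (pow_ne_zero 2 (one_sub_ne_zero_of_norm_lt_one htq))]
  linear_combination (-(2 * π * I)⁻¹ * t * (1 - t * q)) * hM0
    + (-(2 * π * I)⁻¹ * t * q * (1 - t * q)) * hM1
end

section
/- PBW property for the rational degenerate double affine Hecke algebra of type A₁: in the algebra H'' generated by D, x, s with relations sDs = -D, sxs = -x, [D,x] = 1 + 2ks, s² = 1, the elements x^n D^m s^ε for n,m ∈ Z≥0, ε ∈ {0,1} form a basis; moreover the polynomial representation on C[x] (with D acting as the Dunkl operator d/dx - (k/x)(s-1), x as multiplication, s as x ↦ -x) is faithful. -/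
open Polynomial

/-- `divX` (division of a polynomial by `x`, discarding the constant term),
as a `ℂ`-linear map. -/
noncomputable def divXLin : Polynomial ℂ →ₗ[ℂ] Polynomial ℂ where
  toFun := Polynomial.divX
  map_add' := fun _ _ => Polynomial.divX_add
  map_smul' := fun c p => by
    ext n
    simp [Polynomial.coeff_divX, Polynomial.coeff_smul]

/-- The reflection operator `s : f(x) ↦ f(-x)` on `ℂ[x]`, as a linear endomorphism. -/
noncomputable def sReflOp : Module.End ℂ (Polynomial ℂ) :=
  (Polynomial.aeval (-Polynomial.X : Polynomial ℂ)).toLinearMap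

/-- Multiplication by `x` on `ℂ[x]`, as a linear endomorphism. -/
noncomputable def mulXOp : Module.End ℂ (Polynomial ℂ) :=
  LinearMap.mulLeft ℂ (Polynomial.X : Polynomial ℂ)

/-- The Dunkl operator `D = d/dx - (k/x)(s-1)` on `ℂ[x]`: since `(s-1)f` has zero
constant term, `((s-1)f)/x = divX (f(-x) - f(x))`. -/
noncomputable def dunklOp (k : ℂ) : Module.End ℂ (Polynomial ℂ) :=
  (Polynomial.derivative : Polynomial ℂ →ₗ[ℂ] Polynomial ℂ)
    - (LinearMap.mulLeft ℂ (Polynomial.C k)) ∘ₗ divXLin ∘ₗ (sReflOp - LinearMap.id)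

lemma sRefl_monomial (i : ℕ) (a : ℂ) :
    sReflOp ((Polynomial.monomial i) a) = ((-1:ℂ)^i) • (Polynomial.monomial i) a := by
  show Polynomial.aeval (-Polynomial.X : Polynomial ℂ) ((Polynomial.monomial i) a) = _
  rw [Polynomial.aeval_monomial, neg_pow]
  have h1 : ((-1 : Polynomial ℂ))^i = Polynomial.C ((-1:ℂ)^i) := by
    rw [map_pow, map_neg, map_one]
  rw [h1, Polynomial.algebraMap_eq, Polynomial.smul_monomial, ← Polynomial.C_mul_X_pow_eq_monomial,
    smul_eq_mul, map_mul]
  ring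

lemma coeff_sRefl (f : Polynomial ℂ) (n : ℕ) : (sReflOp f).coeff n = (-1)^n * f.coeff n := by
  induction f using Polynomial.induction_on' with
  | add p q hp hq => simp [map_add, hp, hq, mul_add]
  | monomial i a =>
    rw [sRefl_monomial]
    simp only [Polynomial.coeff_smul, Polynomial.coeff_monomial, smul_eq_mul]
    split
    · rename_i h; rw [h]
    · ring

lemma coeff_dunkl (k : ℂ) (f : Polynomial ℂ) (n : ℕ) :
    (dunklOp k f).coeff n = ((n:ℂ)+1) * f.coeff (n+1) - k * (((-1)^(n+1) - 1) * f.coeff (n+1)) := by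
  simp [dunklOp, Polynomial.coeff_derivative, divXLin, Polynomial.coeff_divX, coeff_sRefl,
    LinearMap.mulLeft_apply, Polynomial.coeff_C_mul]
  ring

lemma coeff_mulX (f : Polynomial ℂ) (n : ℕ) :
    (mulXOp f).coeff n = if n = 0 then 0 else f.coeff (n-1) := by
  cases n <;> simp [mulXOp, Polynomial.coeff_X_mul]

lemma s_mul_s : sReflOp * sReflOp = 1 := by
  apply LinearMap.ext; intro f
  apply Polynomial.ext; intro n
  rw [Module.End.mul_apply, coeff_sRefl, coeff_sRefl, Module.End.one_apply]
  rcases Nat.even_or_odd n with hn | hn <;> simp [hn.neg_one_pow]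

lemma s_x_s : sReflOp * mulXOp * sReflOp = -mulXOp := by
  apply LinearMap.ext; intro f
  apply Polynomial.ext; intro n
  rw [Module.End.mul_apply, Module.End.mul_apply, LinearMap.neg_apply, Polynomial.coeff_neg,
    coeff_sRefl, coeff_mulX, coeff_mulX]
  cases n with
  | zero => simp
  | succ n =>
    simp only [Nat.succ_ne_zero, if_false, Nat.add_sub_cancel, coeff_sRefl]
    rcases Nat.even_or_odd n with hn | hn <;>
      simp [pow_succ, hn.neg_one_pow]

lemma s_D_s (k : ℂ) : sReflOp * dunklOp k * sReflOp = -dunklOp k := by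
  apply LinearMap.ext; intro f
  apply Polynomial.ext; intro n
  simp only [Module.End.mul_apply, LinearMap.neg_apply, Polynomial.coeff_neg, coeff_sRefl,
    coeff_dunkl]
  rcases Nat.even_or_odd n with hn | hn <;>
    simp [pow_succ, hn.neg_one_pow] <;> ring

lemma D_x_comm (k : ℂ) : dunklOp k * mulXOp - mulXOp * dunklOp k
    = 1 + algebraMap ℂ (Module.End ℂ (Polynomial ℂ)) (2*k) * sReflOp := by
  apply LinearMap.ext; intro f
  apply Polynomial.ext; intro n
  rw [LinearMap.sub_apply, LinearMap.add_apply, Polynomial.coeff_sub, Polynomial.coeff_add,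
    Module.End.mul_apply, Module.End.mul_apply, Module.End.mul_apply, Module.End.one_apply,
    Module.algebraMap_end_apply, Polynomial.coeff_smul, coeff_sRefl,
    coeff_dunkl, coeff_mulX, coeff_mulX]
  cases n with
  | zero =>
    simp [coeff_mulX]
    ring
  | succ n =>
    simp only [Nat.succ_ne_zero, if_false, Nat.add_sub_cancel, coeff_dunkl, coeff_mulX,
      smul_eq_mul]
    rcases Nat.even_or_odd n with hn | hn <;>
      simp [pow_succ, hn.neg_one_pow, Nat.cast_add] <;> ring

/-- The defining relations of the rational double Hecke algebra `H''` of type `A₁`: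
with generators `D = ι 0`, `x = ι 1`, `s = ι 2`:
`sDs = -D`, `sxs = -x`, `[D,x] = 1 + 2ks`, `s² = 1`. -/
inductive DunklRel (k : ℂ) : FreeAlgebra ℂ (Fin 3) → FreeAlgebra ℂ (Fin 3) → Prop
  | sDs : DunklRel k (FreeAlgebra.ι ℂ (2:Fin 3) * FreeAlgebra.ι ℂ (0:Fin 3) *
      FreeAlgebra.ι ℂ (2:Fin 3)) (-FreeAlgebra.ι ℂ (0:Fin 3))
  | sxs : DunklRel k (FreeAlgebra.ι ℂ (2:Fin 3) * FreeAlgebra.ι ℂ (1:Fin 3) *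
      FreeAlgebra.ι ℂ (2:Fin 3)) (-FreeAlgebra.ι ℂ (1:Fin 3))
  | comm : DunklRel k (FreeAlgebra.ι ℂ (0:Fin 3) * FreeAlgebra.ι ℂ (1:Fin 3) -
      FreeAlgebra.ι ℂ (1:Fin 3) * FreeAlgebra.ι ℂ (0:Fin 3))
      (1 + algebraMap ℂ (FreeAlgebra ℂ (Fin 3)) (2*k) * FreeAlgebra.ι ℂ (2:Fin 3))
  | ss : DunklRel k (FreeAlgebra.ι ℂ (2:Fin 3) * FreeAlgebra.ι ℂ (2:Fin 3)) 1

/-- The rational double Hecke algebra `H''` of type `A₁` with parameter `k`. -/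
abbrev HHrat (k : ℂ) := RingQuot (DunklRel k)

/-- The generator `D` of `H''`. -/
noncomputable def Dgen (k : ℂ) : HHrat k :=
  RingQuot.mkAlgHom ℂ (DunklRel k) (FreeAlgebra.ι ℂ (0:Fin 3))

/-- The generator `x` of `H''`. -/
noncomputable def Xgen (k : ℂ) : HHrat k :=
  RingQuot.mkAlgHom ℂ (DunklRel k) (FreeAlgebra.ι ℂ (1:Fin 3))

/-- The generator `s` of `H''`. -/
noncomputable def Sgen (k : ℂ) : HHrat k :=
  RingQuot.mkAlgHom ℂ (DunklRel k) (FreeAlgebra.ι ℂ (2:Fin 3))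

noncomputable def rho0 (k : ℂ) : HHrat k →ₐ[ℂ] Module.End ℂ (Polynomial ℂ) :=
  RingQuot.liftAlgHom ℂ (s := DunklRel k)
    ⟨FreeAlgebra.lift ℂ ![dunklOp k, mulXOp, sReflOp], by
      rintro a b ⟨⟩ <;>
        simp only [map_mul, map_sub, map_add, map_one, map_neg, FreeAlgebra.lift_ι_apply,
          AlgHom.commutes]
      · show sReflOp * dunklOp k * sReflOp = -dunklOp k; exact s_D_s k
      · show sReflOp * mulXOp * sReflOp = -mulXOp; exact s_x_s
      · show dunklOp k * mulXOp - mulXOp * dunklOp k = _; rw [D_x_comm k, map_mul]; rfl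
      · show sReflOp * sReflOp = 1; exact s_mul_s⟩

lemma rho0_D (k : ℂ) : rho0 k (Dgen k) = dunklOp k := by
  simp [rho0, Dgen, RingQuot.liftAlgHom_mkAlgHom_apply]
lemma rho0_X (k : ℂ) : rho0 k (Xgen k) = mulXOp := by
  simp [rho0, Xgen, RingQuot.liftAlgHom_mkAlgHom_apply]
lemma rho0_S (k : ℂ) : rho0 k (Sgen k) = sReflOp := by
  simp [rho0, Sgen, RingQuot.liftAlgHom_mkAlgHom_apply]


section HHlemmas
variable (k : ℂ)

lemma Hrel_ss : Sgen k * Sgen k = 1 := by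
  have := RingQuot.mkAlgHom_rel ℂ (DunklRel.ss (k := k))
  simpa [Sgen, map_mul, map_one] using this

lemma Hrel_sDs : Sgen k * Dgen k * Sgen k = -Dgen k := by
  have := RingQuot.mkAlgHom_rel ℂ (DunklRel.sDs (k := k))
  simpa [Sgen, Dgen, map_mul, map_neg] using this

lemma Hrel_sxs : Sgen k * Xgen k * Sgen k = -Xgen k := by
  have := RingQuot.mkAlgHom_rel ℂ (DunklRel.sxs (k := k))
  simpa [Sgen, Xgen, map_mul, map_neg] using this

lemma Hrel_comm : Dgen k * Xgen k = Xgen k * Dgen k + 1 + (2*k) • Sgen k := by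
  have h := RingQuot.mkAlgHom_rel ℂ (DunklRel.comm (k := k))
  simp only [map_sub, map_mul, map_add, map_one, AlgHom.commutes] at h
  rw [Algebra.smul_def, map_mul, add_assoc]
  exact sub_eq_iff_eq_add'.mp h

lemma Hrel_sD : Sgen k * Dgen k = -(Dgen k * Sgen k) := by
  have h := Hrel_sDs k
  have h2 := Hrel_ss k
  calc Sgen k * Dgen k = (Sgen k * Dgen k * Sgen k) * Sgen k := by
        rw [mul_assoc, h2, mul_one]
    _ = -(Dgen k * Sgen k) := by rw [h]; exact neg_mul (Dgen k) (Sgen k)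

lemma Hrel_sx : Sgen k * Xgen k = -(Xgen k * Sgen k) := by
  have h := Hrel_sxs k
  have h2 := Hrel_ss k
  calc Sgen k * Xgen k = (Sgen k * Xgen k * Sgen k) * Sgen k := by
        rw [mul_assoc, h2, mul_one]
    _ = -(Xgen k * Sgen k) := by rw [h]; exact neg_mul (Xgen k) (Sgen k)

lemma Hrel_sxpow (n : ℕ) : Sgen k * Xgen k ^ n = ((-1:ℂ)^n) • (Xgen k ^ n * Sgen k) := by
  induction n with
  | zero => simp
  | succ n ih =>
    rw [pow_succ, ← mul_assoc, ih, smul_mul_assoc, mul_assoc, Hrel_sx,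
      mul_neg (Xgen k ^ n) (Xgen k * Sgen k), smul_neg, pow_succ, ← mul_assoc, mul_neg_one]
    exact (neg_smul _ _).symm

lemma Hrel_sDpow (m : ℕ) : Sgen k * Dgen k ^ m = ((-1:ℂ)^m) • (Dgen k ^ m * Sgen k) := by
  induction m with
  | zero => simp
  | succ m ih =>
    rw [pow_succ, ← mul_assoc, ih, smul_mul_assoc, mul_assoc, Hrel_sD,
      mul_neg (Dgen k ^ m) (Dgen k * Sgen k), smul_neg, pow_succ, ← mul_assoc, mul_neg_one]
    exact (neg_smul _ _).symm

end HHlemmas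


noncomputable def vmon (k : ℂ) (p : ℕ × ℕ × Fin 2) : HHrat k :=
  Xgen k ^ p.1 * Dgen k ^ p.2.1 * Sgen k ^ ((p.2.2 : ℕ))

lemma s_mul_vmon (k : ℂ) (n m : ℕ) (ε : Fin 2) :
    Sgen k * (Xgen k ^ n * Dgen k ^ m * Sgen k ^ (ε:ℕ))
      = ((-1:ℂ)^(n+m)) • (Xgen k ^ n * Dgen k ^ m * (Sgen k * Sgen k ^ (ε:ℕ))) := by
  rw [← mul_assoc, ← mul_assoc, Hrel_sxpow, smul_mul_assoc, smul_mul_assoc,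
    mul_assoc (Xgen k ^ n), Hrel_sDpow, mul_smul_comm, smul_mul_assoc, smul_smul, ← pow_add]
  congr 1
  simp only [mul_assoc]

lemma span_vmon_top (k : ℂ) : Submodule.span ℂ (Set.range (vmon k)) = ⊤ := by
  set M := Submodule.span ℂ (Set.range (vmon k)) with hM
  have hmem : ∀ p, vmon k p ∈ M := fun p => Submodule.subset_span ⟨p, rfl⟩
  have hone : (1 : HHrat k) ∈ M := by
    have := hmem (0, 0, 0)
    simpa [vmon] using this
  -- left multiplication by Xgen sends monomials into M
  have hXv : ∀ p, Xgen k * vmon k p ∈ M := by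
    intro p
    have : Xgen k * vmon k p = vmon k (p.1 + 1, p.2) := by
      simp only [vmon, pow_succ', mul_assoc]
    rw [this]; exact hmem _
  -- left multiplication by Sgen sends monomials into M
  have hSv : ∀ p, Sgen k * vmon k p ∈ M := by
    rintro ⟨n, m, ε⟩
    show Sgen k * (Xgen k ^ n * Dgen k ^ m * Sgen k ^ (ε:ℕ)) ∈ M
    rw [s_mul_vmon]
    apply Submodule.smul_mem
    have hv : (ε:ℕ) = 0 ∨ (ε:ℕ) = 1 := by omega
    rcases hv with hv | hv <;> rw [hv]
    · have : Sgen k * Sgen k ^ (0:ℕ) = Sgen k ^ (1:ℕ) := by simp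
      rw [this]; exact hmem (n, m, 1)
    · have : Sgen k * Sgen k ^ (1:ℕ) = Sgen k ^ (0:ℕ) := by simpa using Hrel_ss k
      rw [this]; exact hmem (n, m, 0)
  -- closure of M under left multiplication by a fixed element
  have hclo : ∀ a : HHrat k, (∀ p, a * vmon k p ∈ M) → ∀ b ∈ M, a * b ∈ M := by
    intro a ha b hb
    refine Submodule.span_induction (fun x hx => ?_) (by simp) (fun x y _ _ hx hy => ?_)
      (fun c x _ hx => ?_) hb
    · obtain ⟨p, rfl⟩ := hx; exact ha p
    · rw [mul_add]; exact M.add_mem hx hy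
    · rw [mul_smul_comm]; exact M.smul_mem c hx
  have hXM : ∀ b ∈ M, Xgen k * b ∈ M := hclo _ hXv
  have hSM : ∀ b ∈ M, Sgen k * b ∈ M := hclo _ hSv
  -- left multiplication by Dgen sends monomials into M
  have hDv : ∀ p, Dgen k * vmon k p ∈ M := by
    rintro ⟨n, m, ε⟩
    induction n with
    | zero =>
      show Dgen k * (Xgen k ^ 0 * Dgen k ^ m * Sgen k ^ (ε:ℕ)) ∈ M
      have : Dgen k * (Xgen k ^ 0 * Dgen k ^ m * Sgen k ^ (ε:ℕ))
          = vmon k (0, m + 1, ε) := by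
        simp only [vmon, pow_zero, one_mul, pow_succ', mul_assoc]
      rw [this]; exact hmem _
    | succ n ih =>
      show Dgen k * (Xgen k ^ (n+1) * Dgen k ^ m * Sgen k ^ (ε:ℕ)) ∈ M
      have e1 : Dgen k * (Xgen k ^ (n+1) * Dgen k ^ m * Sgen k ^ (ε:ℕ))
          = (Dgen k * Xgen k) * vmon k (n, m, ε) := by
        simp only [vmon, pow_succ', mul_assoc]
      rw [e1, Hrel_comm, add_mul, add_mul, one_mul, smul_mul_assoc, mul_assoc]
      refine M.add_mem (M.add_mem ?_ (hmem _)) (M.smul_mem _ (hSv _))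
      exact hXM _ ih
  have hDM : ∀ b ∈ M, Dgen k * b ∈ M := hclo _ hDv
  -- every element of the algebra preserves M under left multiplication
  have hall : ∀ a : HHrat k, ∀ b ∈ M, a * b ∈ M := by
    intro a
    obtain ⟨x, rfl⟩ := RingQuot.mkAlgHom_surjective ℂ (DunklRel k) a
    induction x using FreeAlgebra.induction with
    | grade0 r =>
      intro b hb
      rw [AlgHom.commutes, ← Algebra.smul_def]
      exact M.smul_mem r hb
    | grade1 i =>
      fin_cases i
      · exact hDM
      · exact hXM
      · exact hSM
    | mul x y hx hy =>
      intro b hb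
      rw [map_mul, mul_assoc]
      exact hx _ (hy _ hb)
    | add x y hx hy =>
      intro b hb
      rw [map_add, add_mul]
      exact M.add_mem (hx _ hb) (hy _ hb)
  rw [eq_top_iff]
  intro a _
  simpa using hall a 1 hone


noncomputable def ck (k : ℂ) (i : ℕ) : ℂ := (i : ℂ) + (if Odd i then 2*k else 0)

noncomputable def Tmon (k : ℂ) (p : ℕ × ℕ × Fin 2) : Module.End ℂ (Polynomial ℂ) :=
  mulXOp ^ p.1 * dunklOp k ^ p.2.1 * sReflOp ^ ((p.2.2 : ℕ))

lemma dunkl_Xpow (k : ℂ) (j : ℕ) :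
    dunklOp k (Polynomial.X ^ (j+1)) = ck k (j+1) • Polynomial.X ^ j := by
  apply Polynomial.ext; intro n
  rw [coeff_dunkl, Polynomial.coeff_smul, Polynomial.coeff_X_pow, Polynomial.coeff_X_pow]
  by_cases h : n = j
  · subst h
    rw [if_pos rfl, if_pos rfl, smul_eq_mul, mul_one, mul_one, ck]
    rcases Nat.even_or_odd (n+1) with hp | hp
    · rw [if_neg (by simpa [Nat.not_odd_iff_even] using hp), hp.neg_one_pow]
      push_cast; ring
    · rw [if_pos hp, hp.neg_one_pow]
      push_cast; ring
  · rw [if_neg (by omega), if_neg h]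
    simp

lemma dunkl_pow_Xpow (k : ℂ) : ∀ (m j : ℕ), m ≤ j →
    (dunklOp k ^ m) (Polynomial.X ^ j)
      = (∏ i ∈ Finset.range m, ck k (j - i)) • Polynomial.X ^ (j - m) := by
  intro m
  induction m with
  | zero => intro j _; simp
  | succ m ih =>
    intro j hj
    obtain ⟨j', rfl⟩ : ∃ j', j = j' + 1 := ⟨j - 1, by omega⟩
    rw [pow_succ, Module.End.mul_apply, dunkl_Xpow, map_smul, ih j' (by omega)]
    rw [smul_smul, Finset.prod_range_succ']
    have h1 : ∀ i, j' + 1 - (i + 1) = j' - i := fun i => by omega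
    have h2 : j' + 1 - (m + 1) = j' - m := by omega
    simp only [h1, h2, Nat.sub_zero]
    congr 1
    ring

lemma sRefl_Xpow (j : ℕ) :
    sReflOp ((Polynomial.X : Polynomial ℂ) ^ j) = ((-1:ℂ)^j) • Polynomial.X ^ j := by
  rw [Polynomial.X_pow_eq_monomial, sRefl_monomial]

lemma sRefl_pow_Xpow (e : Fin 2) (j : ℕ) :
    (sReflOp ^ (e:ℕ)) ((Polynomial.X : Polynomial ℂ) ^ j)
      = (((-1:ℂ)^j)^(e:ℕ)) • Polynomial.X ^ j := by
  have hv : (e:ℕ) = 0 ∨ (e:ℕ) = 1 := by omega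
  rcases hv with hv | hv <;> rw [hv]
  · simp
  · simpa using sRefl_Xpow j

lemma mulX_pow_apply (n : ℕ) (g : Polynomial ℂ) :
    (mulXOp ^ n) g = Polynomial.X ^ n * g := by
  rw [mulXOp, LinearMap.pow_mulLeft, LinearMap.mulLeft_apply]

lemma Tmon_apply (k : ℂ) (p : ℕ × ℕ × Fin 2) (j : ℕ) (h : p.2.1 ≤ j) :
    Tmon k p (Polynomial.X ^ j)
      = ((((-1:ℂ)^j)^((p.2.2:ℕ))) * ∏ i ∈ Finset.range p.2.1, ck k (j - i))
          • Polynomial.X ^ (j - p.2.1 + p.1) := by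
  rw [Tmon, Module.End.mul_apply, Module.End.mul_apply, sRefl_pow_Xpow, map_smul, map_smul,
    dunkl_pow_Xpow k p.2.1 j h, map_smul, mulX_pow_apply, smul_smul, ← Polynomial.X_pow_mul,
    ← pow_add]

lemma indep_poly (P : ℕ → Polynomial ℂ) (hdeg : ∀ m, (P m).natDegree = m)
    (hc : ∀ m, (P m).coeff m ≠ 0) (S : Finset ℕ) (u : ℕ → ℂ)
    (h : ∑ m ∈ S, u m • P m = 0) : ∀ m ∈ S, u m = 0 := by
  by_contra hbad
  push_neg at hbad
  obtain ⟨m1, hm1S, hm1⟩ := hbad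
  set T := S.filter (fun m => u m ≠ 0) with hT
  have hTne : T.Nonempty := ⟨m1, Finset.mem_filter.mpr ⟨hm1S, hm1⟩⟩
  set Mx := T.max' hTne with hMx
  have hMxT : Mx ∈ T := T.max'_mem hTne
  have hMxS : Mx ∈ S := (Finset.mem_filter.mp hMxT).1
  have hMxu : u Mx ≠ 0 := (Finset.mem_filter.mp hMxT).2
  have hco : (∑ m ∈ S, u m • P m).coeff Mx = u Mx * (P Mx).coeff Mx := by
    rw [Polynomial.finset_sum_coeff]
    refine Finset.sum_eq_single_of_mem Mx hMxS ?_
    intro b hbS hbne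
    rw [Polynomial.coeff_smul, smul_eq_mul]
    by_cases hub : u b = 0
    · rw [hub, zero_mul]
    · have hbT : b ∈ T := Finset.mem_filter.mpr ⟨hbS, hub⟩
      have hble : b ≤ Mx := Finset.le_max' T b hbT
      have hblt : b < Mx := lt_of_le_of_ne hble hbne
      rw [Polynomial.coeff_eq_zero_of_natDegree_lt (by rw [hdeg]; exact hblt), mul_zero]
  rw [h, Polynomial.coeff_zero] at hco
  exact hMxu (by
    rcases mul_eq_zero.mp hco.symm with h' | h'
    · exact h'
    · exact absurd h' (hc Mx))

noncomputable def cpol (k : ℂ) (r i : ℕ) : Polynomial ℂ :=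
  Polynomial.C 2 * Polynomial.X
    + Polynomial.C (((r:ℂ) - (i:ℂ)) + if Odd (r + i) then 2*k else 0)

noncomputable def Ppol (k : ℂ) (r m : ℕ) : Polynomial ℂ :=
  ∏ i ∈ Finset.range m, cpol k r i

lemma cpol_ne_zero (k : ℂ) (r i : ℕ) : cpol k r i ≠ 0 := by
  intro h
  have := Polynomial.degree_linear (a := (2:ℂ))
    (b := ((r:ℂ) - (i:ℂ)) + if Odd (r + i) then 2*k else 0) two_ne_zero
  rw [← cpol, h] at this
  simp at this

lemma cpol_natDegree (k : ℂ) (r i : ℕ) : (cpol k r i).natDegree = 1 := by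
  have := Polynomial.degree_linear (a := (2:ℂ))
    (b := ((r:ℂ) - (i:ℂ)) + if Odd (r + i) then 2*k else 0) two_ne_zero
  rw [← cpol] at this
  exact Polynomial.natDegree_eq_of_degree_eq_some this

lemma Ppol_natDegree (k : ℂ) (r m : ℕ) : (Ppol k r m).natDegree = m := by
  rw [Ppol, Polynomial.natDegree_prod _ _ (fun i _ => cpol_ne_zero k r i)]
  simp [cpol_natDegree]

lemma Ppol_leading (k : ℂ) (r m : ℕ) : (Ppol k r m).coeff m ≠ 0 := by
  have h1 : (Ppol k r m).leadingCoeff = 2^m := by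
    rw [Ppol, Polynomial.leadingCoeff_prod]
    have : ∀ i ∈ Finset.range m, (cpol k r i).leadingCoeff = 2 := by
      intro i _
      exact Polynomial.leadingCoeff_linear two_ne_zero
    rw [Finset.prod_congr rfl this, Finset.prod_const, Finset.card_range]
  have h2 : (Ppol k r m).coeff m = (Ppol k r m).leadingCoeff := by
    rw [Polynomial.leadingCoeff, Ppol_natDegree]
  rw [h2, h1]
  exact pow_ne_zero _ two_ne_zero

lemma Ppol_eval (k : ℂ) (r m t : ℕ) (hm : m ≤ 2*t) :
    (Ppol k r m).eval ((t:ℕ):ℂ) = ∏ i ∈ Finset.range m, ck k (2*t + r - i) := by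
  rw [Ppol, Polynomial.eval_prod]
  refine Finset.prod_congr rfl ?_
  intro i hi
  have hi' : i < m := Finset.mem_range.mp hi
  have hile : i ≤ 2*t + r := by omega
  have hpar : Odd (2*t + r - i) ↔ Odd (r + i) := by
    rw [Nat.odd_iff, Nat.odd_iff]
    omega
  rw [cpol, ck]
  have hcast : ((2*t + r - i : ℕ) : ℂ) = 2*(t:ℂ) + (r:ℂ) - (i:ℂ) := by
    push_cast [Nat.cast_sub hile]
    ring
  simp only [Polynomial.eval_add, Polynomial.eval_mul, Polynomial.eval_C, Polynomial.eval_X,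
    hcast]
  rw [if_congr hpar rfl rfl]
  ring

theorem Tmon_linearIndependent (k : ℂ) : LinearIndependent ℂ (Tmon k) := by
  rw [linearIndependent_iff'']
  intro s g hg0 hsum p₀
  obtain ⟨n₀, m₀, ε₀⟩ := p₀
  by_cases hp₀ : ((n₀, m₀, ε₀) : ℕ × ℕ × Fin 2) ∈ s
  swap
  · exact hg0 _ hp₀
  classical
  set J := s.sup (fun p => p.2.1) with hJ
  have hmle : ∀ p ∈ s, p.2.1 ≤ J := fun p hp => Finset.le_sup (f := fun p => p.2.1) hp
  have hm₀ : m₀ ≤ J := hmle _ hp₀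
  set F := s.filter (fun p => p.1 + m₀ = n₀ + p.2.1) with hF
  -- Step A : evaluation identities
  have key : ∀ r t : ℕ, ∑ p ∈ F,
      g p * ((((-1:ℂ))^(2*(t+J)+r))^((p.2.2:ℕ)) * ∏ i ∈ Finset.range p.2.1,
        ck k (2*(t+J)+r - i)) = 0 := by
    intro r t
    set j := 2*(t+J)+r with hj
    have hJj : J ≤ j := by omega
    have h1 : (∑ p ∈ s, g p • Tmon k p) ((Polynomial.X : Polynomial ℂ) ^ j) = 0 := by
      rw [hsum]; rfl
    rw [LinearMap.sum_apply] at h1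
    have h2 : ∑ p ∈ s, (g p * ((((-1:ℂ))^j)^((p.2.2:ℕ)) * ∏ i ∈ Finset.range p.2.1,
        ck k (j - i))) • (Polynomial.X : Polynomial ℂ) ^ (j - p.2.1 + p.1) = 0 := by
      rw [← h1]
      refine Finset.sum_congr rfl ?_
      intro p hp
      rw [LinearMap.smul_apply, Tmon_apply k p j (le_trans (hmle p hp) hJj), smul_smul]
    have h4 := congrArg (fun q => Polynomial.coeff q (j - m₀ + n₀)) h2
    simp only [Polynomial.finset_sum_coeff, Polynomial.coeff_smul, Polynomial.coeff_X_pow,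
      smul_eq_mul, Polynomial.coeff_zero] at h4
    rw [← h4, hF, Finset.sum_filter]
    refine Finset.sum_congr rfl ?_
    intro p hp
    have hple : p.2.1 ≤ j := le_trans (hmle p hp) hJj
    have hiff : (j - m₀ + n₀ = j - p.2.1 + p.1) ↔ (p.1 + m₀ = n₀ + p.2.1) := by
      constructor <;> intro h <;> omega
    by_cases hcond : p.1 + m₀ = n₀ + p.2.1
    · rw [if_pos hcond, if_pos (hiff.mpr hcond), mul_one]
    · rw [if_neg hcond, if_neg (fun hc => hcond (hiff.mp hc)), mul_zero]
  -- Step B : the associated polynomials vanish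
  have hQ : ∀ r : ℕ, (∑ p ∈ F, (g p * (((-1:ℂ))^r)^((p.2.2:ℕ))) • Ppol k r p.2.1) = 0 := by
    intro r
    apply Polynomial.eq_zero_of_infinite_isRoot
    apply Set.infinite_of_injective_forall_mem
      (f := fun t : ℕ => (((t + J : ℕ)) : ℂ))
    · intro a b hab
      have : (a + J : ℕ) = (b + J : ℕ) := Nat.cast_injective hab
      omega
    · intro t
      show Polynomial.IsRoot _ _
      rw [Polynomial.IsRoot.def]
      have hev : ∀ p ∈ F, Polynomial.eval (((t + J : ℕ)) : ℂ)
          ((g p * (((-1:ℂ))^r)^((p.2.2:ℕ))) • Ppol k r p.2.1)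
          = g p * ((((-1:ℂ))^(2*(t+J)+r))^((p.2.2:ℕ)) * ∏ i ∈ Finset.range p.2.1,
              ck k (2*(t+J)+r - i)) := by
        intro p hp
        have hpF : p ∈ s := (Finset.mem_filter.mp hp).1
        have hmle' : p.2.1 ≤ 2*(t+J) := le_trans (hmle p hpF) (by omega)
        rw [Polynomial.smul_eq_C_mul, Polynomial.eval_mul, Polynomial.eval_C,
          Ppol_eval k r p.2.1 (t+J) hmle']
        have hsign : ((-1:ℂ))^(2*(t+J)+r) = ((-1:ℂ))^r := by
          rw [pow_add, pow_mul, neg_one_sq, one_pow, one_mul]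
        rw [hsign, mul_assoc]
      rw [Polynomial.eval_finset_sum, Finset.sum_congr rfl hev, key r t]
  -- Step C : group by the D-degree and use linear independence of the polynomials
  have hu : ∀ r : ℕ, ∀ m ∈ F.image (fun p => p.2.1),
      (∑ p ∈ F.filter (fun p => p.2.1 = m), g p * (((-1:ℂ))^r)^((p.2.2:ℕ))) = 0 := by
    intro r
    refine indep_poly (Ppol k r) (Ppol_natDegree k r) (Ppol_leading k r) _ _ ?_
    have hgroup : ∑ m ∈ F.image (fun p => p.2.1),
        (∑ p ∈ F.filter (fun p => p.2.1 = m), g p * (((-1:ℂ))^r)^((p.2.2:ℕ))) • Ppol k r m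
        = ∑ p ∈ F, (g p * (((-1:ℂ))^r)^((p.2.2:ℕ))) • Ppol k r p.2.1 := by
      rw [← Finset.sum_fiberwise_of_maps_to
        (fun p hp => Finset.mem_image_of_mem (fun p => p.2.1) hp)
        (fun p => (g p * (((-1:ℂ))^r)^((p.2.2:ℕ))) • Ppol k r p.2.1)]
      refine Finset.sum_congr rfl ?_
      intro m _
      rw [Finset.sum_smul]
      refine Finset.sum_congr rfl ?_
      intro p hp
      rw [(Finset.mem_filter.mp hp).2]
    rw [hgroup, hQ r]
  -- Step D : extract the two coefficients
  have hp₀F : ((n₀, m₀, ε₀) : ℕ × ℕ × Fin 2) ∈ F := by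
    rw [hF, Finset.mem_filter]
    exact ⟨hp₀, rfl⟩
  have hm₀im : m₀ ∈ F.image (fun p => p.2.1) := Finset.mem_image_of_mem _ hp₀F
  have hsub : F.filter (fun p => p.2.1 = m₀)
      ⊆ {((n₀, m₀, 0) : ℕ × ℕ × Fin 2), (n₀, m₀, 1)} := by
    intro p hp
    obtain ⟨hpF, hpm⟩ := Finset.mem_filter.mp hp
    obtain ⟨hps, hpd⟩ := Finset.mem_filter.mp hpF
    have hp1 : p.1 = n₀ := by omega
    have hεv : (p.2.2 : ℕ) = 0 ∨ (p.2.2 : ℕ) = 1 := by omega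
    have hpe : p = (p.1, p.2.1, p.2.2) := rfl
    rcases hεv with hεv | hεv
    · have : p.2.2 = (0 : Fin 2) := Fin.ext hεv
      rw [Finset.mem_insert]
      left
      rw [hpe, hp1, hpm, this]
    · have : p.2.2 = (1 : Fin 2) := Fin.ext hεv
      rw [Finset.mem_insert]
      right
      rw [Finset.mem_singleton, hpe, hp1, hpm, this]
  have hval : ∀ r : ℕ, g (n₀, m₀, 0) * (((-1:ℂ))^r)^((0:Fin 2):ℕ)
      + g (n₀, m₀, 1) * (((-1:ℂ))^r)^((1:Fin 2):ℕ) = 0 := by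
    intro r
    have h := hu r m₀ hm₀im
    rw [Finset.sum_subset hsub ?hzero] at h
    case hzero =>
      intro q hq hqn
      have hqcond : q.2.1 = m₀ ∧ q.1 + m₀ = n₀ + q.2.1 := by
        rcases Finset.mem_insert.mp hq with hq' | hq'
        · rw [hq']; exact ⟨rfl, rfl⟩
        · rw [Finset.mem_singleton.mp hq']; exact ⟨rfl, rfl⟩
      have hqs : q ∉ s := by
        intro hqs
        exact hqn (Finset.mem_filter.mpr ⟨Finset.mem_filter.mpr ⟨hqs, hqcond.2⟩, hqcond.1⟩)
      rw [hg0 q hqs, zero_mul]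
    rw [Finset.sum_insert (by simp), Finset.sum_singleton] at h
    exact h
  have h0 := hval 0
  have h1 := hval 1
  simp only [pow_zero, pow_one, one_pow, mul_one, Fin.val_zero, Fin.val_one] at h0 h1
  have hg00 : g (n₀, m₀, 0) = 0 := by linear_combination (h0 + h1) / 2
  have hg01 : g (n₀, m₀, 1) = 0 := by linear_combination (h0 - h1) / 2
  have hεv : (ε₀ : ℕ) = 0 ∨ (ε₀ : ℕ) = 1 := by omega
  rcases hεv with hεv | hεv
  · rw [show ε₀ = (0 : Fin 2) from Fin.ext hεv]; exact hg00
  · rw [show ε₀ = (1 : Fin 2) from Fin.ext hεv]; exact hg01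

lemma rho_vmon (k : ℂ) (ρ : HHrat k →ₐ[ℂ] Module.End ℂ (Polynomial ℂ))
    (hD : ρ (Dgen k) = dunklOp k) (hX : ρ (Xgen k) = mulXOp) (hS : ρ (Sgen k) = sReflOp)
    (p : ℕ × ℕ × Fin 2) : ρ (vmon k p) = Tmon k p := by
  simp [vmon, Tmon, map_mul, map_pow, hD, hX, hS]
/-- PBW property for `H''`: the elements `x^n D^m s^ε` (`n,m ∈ ℤ≥0`, `ε ∈ {0,1}`)
form a basis of `H''`; moreover, the polynomial representation (Dunkl operator,
multiplication by `x`, reflection) is faithful. -/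
theorem HHrat_PBW_and_faithful (k : ℂ) :
    (LinearIndependent ℂ (fun p : ℕ × ℕ × Fin 2 =>
        Xgen k ^ p.1 * Dgen k ^ p.2.1 * Sgen k ^ (p.2.2 : ℕ)) ∧
      Submodule.span ℂ (Set.range (fun p : ℕ × ℕ × Fin 2 =>
        Xgen k ^ p.1 * Dgen k ^ p.2.1 * Sgen k ^ (p.2.2 : ℕ))) = ⊤) ∧
    (∀ ρ : HHrat k →ₐ[ℂ] Module.End ℂ (Polynomial ℂ),
      ρ (Dgen k) = dunklOp k → ρ (Xgen k) = mulXOp → ρ (Sgen k) = sReflOp →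
      Function.Injective ρ) := by
  have hveq : (fun p : ℕ × ℕ × Fin 2 => Xgen k ^ p.1 * Dgen k ^ p.2.1 * Sgen k ^ ((p.2.2 : ℕ)))
      = vmon k := rfl
  rw [hveq]
  refine ⟨⟨?_, span_vmon_top k⟩, ?_⟩
  · have hcomp : (rho0 k).toLinearMap ∘ (vmon k) = Tmon k :=
      funext fun p => rho_vmon k (rho0 k) (rho0_D k) (rho0_X k) (rho0_S k) p
    exact LinearIndependent.of_comp (rho0 k).toLinearMap
      (by rw [hcomp]; exact Tmon_linearIndependent k)
  · intro ρ hD hX hS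
    rw [injective_iff_map_eq_zero]
    intro a ha
    have hmem : a ∈ Submodule.span ℂ (Set.range (vmon k)) := by
      rw [span_vmon_top k]; exact Submodule.mem_top
    obtain ⟨l, hl⟩ := Finsupp.mem_span_range_iff_exists_finsupp.mp hmem
    have himg : (Finsupp.linearCombination ℂ (Tmon k)) l = 0 := by
      rw [Finsupp.linearCombination_apply]
      have : (l.sum fun i c => c • Tmon k i) = ρ a := by
        rw [← hl, map_finsuppSum]
        refine Finsupp.sum_congr ?_
        intro p _
        rw [map_smul, rho_vmon k ρ hD hX hS p]
      rw [this, ha]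
    have hl0 : l = 0 := linearIndependent_iff.mp (Tmon_linearIndependent k) l himg
    rw [← hl, hl0]
    simp
end

section
/- The polynomial representation C[x] of the algebra H'' = ⟨D, x, s : sDs = -D, sxs = -x, [D,x] = 1+2ks, s² = 1⟩ (with D acting as the Dunkl operator, x as multiplication, s as reflection) is irreducible if and only if k ∉ -1/2 - Z≥0; when k = -1/2 - n for n ∈ Z≥0, the ideal generated by x^{2n+1} is a proper nontrivial submodule and the quotient C[x]/(x^{2n+1}) is an irreducible H''-module of dimension 2n+1. -/
/-
The Dunkl operator lowers degree by one and scales the top coefficient: the coefficient of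
`x^(m-1)` in `D f` is `(m - k((-1)^m - 1))` times that of `x^m`, i.e. `m` for even `m` and
`m + 2k` for odd `m`. If none of these factors vanishes up to the degree of a nonzero `f` in
an invariant subspace, applying `D` repeatedly reaches a nonzero constant, and multiplication
by `x` then generates all of `ℂ[x]`. The factors vanish exactly when `m = 2n+1` and
`k = -1/2 - n`; then `D (x^(2n+1)) = 0`, so `(x^(2n+1))` is invariant, and an invariant
subspace strictly containing it contains a nonzero remainder of degree `≤ 2n`, on which no
factor vanishes, so it is everything.
-/

open Polynomial

/-- The reflection operator `s : f(x) ↦ f(-x)` on `ℂ[x]`. -/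
noncomputable def sRefl : Polynomial ℂ → Polynomial ℂ :=
  fun f => Polynomial.aeval (-Polynomial.X : Polynomial ℂ) f

/-- The Dunkl operator `D = d/dx - (k/x)(s-1)`: since `(s-1)f` has zero constant
term, `((s-1)f)/x` is the polynomial `divX (f(-x) - f(x))`. -/
noncomputable def dunkl (k : ℂ) (f : Polynomial ℂ) : Polynomial ℂ :=
  Polynomial.derivative f - Polynomial.C k * Polynomial.divX (sRefl f - f)

/-- `W` is invariant under the polynomial representation of `H''`, i.e. under the
Dunkl operator, multiplication by `x`, and the reflection `s`. -/
def IsHHSubmodule (k : ℂ) (W : Submodule ℂ (Polynomial ℂ)) : Prop :=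
  (∀ f ∈ W, dunkl k f ∈ W) ∧ (∀ f ∈ W, Polynomial.X * f ∈ W) ∧
  (∀ f ∈ W, sRefl f ∈ W)

/-- The ideal `(x^{2n+1})` of `ℂ[x]`, viewed as a `ℂ`-subspace. -/
noncomputable def xIdeal (n : ℕ) : Submodule ℂ (Polynomial ℂ) :=
  Submodule.restrictScalars ℂ (Ideal.span {Polynomial.X ^ (2*n+1)} : Ideal (Polynomial ℂ))

noncomputable def dunklFactor (k : ℂ) (m : ℕ) : ℂ := m - k * ((-1) ^ m - 1)

lemma sRefl_coeff (f : ℂ[X]) (j : ℕ) : (sRefl f).coeff j = (-1) ^ j * f.coeff j := by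
  induction f using Polynomial.induction_on' with
  | add p q hp hq => simp only [sRefl, map_add, coeff_add] at *; rw [hp, hq]; ring
  | monomial n a =>
    rw [sRefl, aeval_monomial, algebraMap_eq, neg_pow, ← C_1, ← C_neg, ← C_pow, ← mul_assoc,
      ← C_mul, coeff_C_mul, coeff_X_pow, coeff_monomial]
    rcases eq_or_ne j n with rfl | h <;> simp [*, Ne.symm, mul_comm]

lemma dunkl_coeff (k : ℂ) (f : ℂ[X]) (j : ℕ) :
    (dunkl k f).coeff j = dunklFactor k (j + 1) * f.coeff (j + 1) := by
  simp only [dunkl, dunklFactor, coeff_sub, coeff_derivative, coeff_C_mul, coeff_divX, sRefl_coeff]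
  push_cast
  ring

lemma natDegree_dunkl_le (k : ℂ) (f : ℂ[X]) : (dunkl k f).natDegree ≤ f.natDegree - 1 :=
  natDegree_le_iff_coeff_eq_zero.mpr fun j hj => by
    rw [dunkl_coeff, coeff_eq_zero_of_natDegree_lt (by omega), mul_zero]

lemma dunklFactor_eq_zero_iff (k : ℂ) {i : ℕ} (hi : 1 ≤ i) :
    dunklFactor k i = 0 ↔ ∃ n : ℕ, i = 2 * n + 1 ∧ k = -(1 / 2) - n := by
  rcases Nat.even_or_odd' i with ⟨n, rfl | rfl⟩
  · rw [dunklFactor, (even_two_mul n).neg_one_pow]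
    refine iff_of_false (by norm_num; omega) fun ⟨m, hm, _⟩ => by omega
  · rw [dunklFactor, (odd_two_mul_add_one n).neg_one_pow]
    push_cast
    refine ⟨fun h => ⟨n, rfl, by linear_combination h / 2⟩, fun ⟨m, hm, hk⟩ => ?_⟩
    obtain rfl : n = m := by omega
    linear_combination 2 * hk

lemma eq_top_of_one_mem {R : Type*} [CommSemiring R] {W : Submodule R R[X]}
    (hX : ∀ f ∈ W, X * f ∈ W) (h1 : (1 : R[X]) ∈ W) : W = ⊤ := by
  refine Submodule.eq_top_iff'.mpr fun p => ?_
  induction p using Polynomial.induction_on with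
  | C a => simpa [smul_eq_C_mul] using W.smul_mem a h1
  | add p q hp hq => exact W.add_mem hp hq
  | monomial n a h => exact (by ring : X * (C a * X ^ n) = C a * X ^ (n + 1)) ▸ hX _ h

section InvariantSubspace

variable {k : ℂ} {W : Submodule ℂ ℂ[X]}

lemma one_mem_of_dunkl_mem (hW : ∀ f ∈ W, dunkl k f ∈ W) :
    ∀ (d : ℕ) (f : ℂ[X]), f ∈ W → f.natDegree ≤ d → f.coeff d ≠ 0 →
      (∀ i, 1 ≤ i → i ≤ d → dunklFactor k i ≠ 0) → (1 : ℂ[X]) ∈ W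
  | 0, f, hf, hdeg, hc, _ => by
    rw [eq_C_of_natDegree_le_zero hdeg] at hf
    simpa [smul_C, hc] using W.smul_mem (f.coeff 0)⁻¹ hf
  | d + 1, f, hf, hdeg, hc, hk => by
    refine one_mem_of_dunkl_mem hW d (dunkl k f) (hW f hf)
      ((natDegree_dunkl_le k f).trans (by omega)) ?_ fun i h₁ h₂ => hk i h₁ (by omega)
    rw [dunkl_coeff]
    exact mul_ne_zero (hk (d + 1) (by omega) le_rfl) hc

lemma IsHHSubmodule.eq_top_of_mem (hW : IsHHSubmodule k W) {f : ℂ[X]} (hf : f ∈ W)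
    (hf0 : f ≠ 0) (hk : ∀ i, 1 ≤ i → i ≤ f.natDegree → dunklFactor k i ≠ 0) : W = ⊤ :=
  eq_top_of_one_mem hW.2.1 <|
    one_mem_of_dunkl_mem hW.1 _ f hf le_rfl (leadingCoeff_ne_zero.mpr hf0) hk

end InvariantSubspace

section XIdeal

variable {n : ℕ}

lemma mem_xIdeal_iff {f : ℂ[X]} : f ∈ xIdeal n ↔ ∀ d < 2 * n + 1, f.coeff d = 0 := by
  rw [xIdeal, Submodule.restrictScalars_mem, Ideal.mem_span_singleton, X_pow_dvd_iff]

lemma isHHSubmodule_xIdeal (n : ℕ) : IsHHSubmodule (-(1 / 2) - n) (xIdeal n) := by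
  refine ⟨fun f hf => ?_, fun f hf => ?_, fun f hf => ?_⟩
  · rw [mem_xIdeal_iff] at hf ⊢
    intro d hd
    rw [dunkl_coeff]
    rcases Nat.lt_or_ge (d + 1) (2 * n + 1) with h | h
    · rw [hf _ h, mul_zero]
    · rw [(dunklFactor_eq_zero_iff _ (by omega)).mpr ⟨n, by omega, rfl⟩, zero_mul]
  · exact Ideal.mul_mem_left _ _ hf
  · rw [mem_xIdeal_iff] at hf ⊢
    intro d hd
    rw [sRefl_coeff, hf d hd, mul_zero]

lemma xIdeal_ne_bot (n : ℕ) : xIdeal n ≠ ⊥ := fun h => by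
  have : (X ^ (2 * n + 1) : ℂ[X]) ∈ xIdeal n := Ideal.subset_span rfl
  rw [h, Submodule.mem_bot] at this
  exact pow_ne_zero _ X_ne_zero this

lemma xIdeal_ne_top (n : ℕ) : xIdeal n ≠ ⊤ := fun h => by
  have := mem_xIdeal_iff.mp (h ▸ Submodule.mem_top : (1 : ℂ[X]) ∈ xIdeal n) 0 (by omega)
  simp at this

lemma finrank_quotient_xIdeal (n : ℕ) : Module.finrank ℂ (ℂ[X] ⧸ xIdeal n) = 2 * n + 1 := by
  rw [xIdeal, (Submodule.Quotient.restrictScalarsEquiv ℂ _).finrank_eq,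
    finrank_quotient_span_eq_natDegree, natDegree_X_pow]

lemma exists_natDegree_le_of_notMem_xIdeal {U : Submodule ℂ ℂ[X]} (hle : xIdeal n ≤ U)
    {f : ℂ[X]} (hf : f ∈ U) (hfn : f ∉ xIdeal n) :
    ∃ g ∈ U, g ≠ 0 ∧ g.natDegree ≤ 2 * n := by
  have hmonic : (X ^ (2 * n + 1) : ℂ[X]).Monic := monic_X_pow _
  refine ⟨f %ₘ X ^ (2 * n + 1), ?_, ?_, ?_⟩
  · rw [modByMonic_eq_sub_mul_div]
    exact U.sub_mem hf (hle (Ideal.mul_mem_right _ _ (Ideal.subset_span rfl)))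
  · rw [Ne, modByMonic_eq_zero_iff_dvd hmonic]
    exact fun h => hfn (Ideal.mem_span_singleton.mpr h)
  · have := natDegree_modByMonic_lt f hmonic fun h => by simpa using congrArg natDegree h
    rw [natDegree_X_pow] at this
    omega

lemma eq_xIdeal_or_eq_top_of_le {U : Submodule ℂ ℂ[X]} (hle : xIdeal n ≤ U)
    (hU : IsHHSubmodule (-(1 / 2) - n) U) : U = xIdeal n ∨ U = ⊤ := by
  by_cases hUle : U ≤ xIdeal n
  · exact .inl (le_antisymm hUle hle)
  obtain ⟨f, hf, hfn⟩ := SetLike.not_le_iff_exists.mp hUle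
  obtain ⟨g, hg, hg0, hdeg⟩ := exists_natDegree_le_of_notMem_xIdeal hle hf hfn
  refine .inr (hU.eq_top_of_mem hg hg0 fun i h₁ h₂ h => ?_)
  obtain ⟨m, rfl, hm⟩ := (dunklFactor_eq_zero_iff _ h₁).mp h
  have : n = m := by exact_mod_cast (sub_right_injective hm : (n : ℂ) = m)
  omega

end XIdeal

lemma IsHHSubmodule.eq_bot_or_eq_top {k : ℂ} (hk : ∀ n : ℕ, k ≠ -(1 / 2) - n)
    {W : Submodule ℂ ℂ[X]} (hW : IsHHSubmodule k W) : W = ⊥ ∨ W = ⊤ := by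
  refine or_iff_not_imp_left.mpr fun hW0 => ?_
  obtain ⟨f, hf, hf0⟩ := (Submodule.ne_bot_iff W).mp hW0
  refine hW.eq_top_of_mem hf hf0 fun i h₁ _ h => ?_
  obtain ⟨n, -, hkn⟩ := (dunklFactor_eq_zero_iff k h₁).mp h
  exact hk n hkn

/-- The polynomial representation `ℂ[x]` of `H''` is irreducible iff
`k ∉ -1/2 - ℤ≥0`; for `k = -1/2 - n`, the ideal `(x^{2n+1})` is a proper nontrivial
submodule and the quotient `ℂ[x]/(x^{2n+1})` is an irreducible `H''`-module of
dimension `2n+1`. -/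
theorem polynomial_rep_irreducible_iff (k : ℂ) :
    ((∀ W : Submodule ℂ (Polynomial ℂ), IsHHSubmodule k W → W = ⊥ ∨ W = ⊤) ↔
      ∀ n : ℕ, k ≠ -(1/2 : ℂ) - (n:ℂ)) ∧
    (∀ n : ℕ, k = -(1/2 : ℂ) - (n:ℂ) →
      IsHHSubmodule k (xIdeal n) ∧ xIdeal n ≠ ⊥ ∧ xIdeal n ≠ ⊤ ∧
      (∀ U : Submodule ℂ (Polynomial ℂ),
        xIdeal n ≤ U → IsHHSubmodule k U → U = xIdeal n ∨ U = ⊤) ∧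
      Module.finrank ℂ (Polynomial ℂ ⧸ xIdeal n) = 2*n + 1) := by
  refine ⟨⟨fun hirr n hk => ?_, fun hk W hW => hW.eq_bot_or_eq_top hk⟩, ?_⟩
  · subst hk
    exact (hirr _ (isHHSubmodule_xIdeal n)).elim (xIdeal_ne_bot n) (xIdeal_ne_top n)
  · rintro n rfl
    exact ⟨isHHSubmodule_xIdeal n, xIdeal_ne_bot n, xIdeal_ne_top n,
      fun U => eq_xIdeal_or_eq_top_of_le, finrank_quotient_xIdeal n⟩
end

section
/- In the double affine Hecke algebra HH of type A₁ with generators X^{±1}, Y^{±1}, T and relations TXT = X^{-1}, TY^{-1}T = Y, Y^{-1}X^{-1}YX T² q^{1/2} = 1, (T - t^{1/2})(T + t^{-1/2}) = 0, the assignment φ(X) = Y^{-1}, φ(Y) = X^{-1}, φ(T) = T, φ(q) = q, φ(t) = t extends to an anti-involution of HH. -/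
/-- The defining relations of the double affine Hecke algebra of type `A₁` over a
field `F` containing `v = q^{1/2}` and `w = t^{1/2}`, with generators
`X = ι 0`, `X⁻¹ = ι 1`, `Y = ι 2`, `Y⁻¹ = ι 3`, `T = ι 4`:
`X X⁻¹ = X⁻¹ X = 1`, `Y Y⁻¹ = Y⁻¹ Y = 1`, `TXT = X⁻¹`, `TY⁻¹T = Y`,
`Y⁻¹X⁻¹YX T² q^{1/2} = 1`, `(T - t^{1/2})(T + t^{-1/2}) = 0`. -/
inductive DAHArel (F : Type) [Field F] (v w : F) :
    FreeAlgebra F (Fin 5) → FreeAlgebra F (Fin 5) → Prop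
  | xxi : DAHArel F v w (FreeAlgebra.ι F (0:Fin 5) * FreeAlgebra.ι F (1:Fin 5)) 1
  | xix : DAHArel F v w (FreeAlgebra.ι F (1:Fin 5) * FreeAlgebra.ι F (0:Fin 5)) 1
  | yyi : DAHArel F v w (FreeAlgebra.ι F (2:Fin 5) * FreeAlgebra.ι F (3:Fin 5)) 1
  | yiy : DAHArel F v w (FreeAlgebra.ι F (3:Fin 5) * FreeAlgebra.ι F (2:Fin 5)) 1
  | txt : DAHArel F v w (FreeAlgebra.ι F (4:Fin 5) * FreeAlgebra.ι F (0:Fin 5) *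
      FreeAlgebra.ι F (4:Fin 5)) (FreeAlgebra.ι F (1:Fin 5))
  | tyt : DAHArel F v w (FreeAlgebra.ι F (4:Fin 5) * FreeAlgebra.ι F (3:Fin 5) *
      FreeAlgebra.ι F (4:Fin 5)) (FreeAlgebra.ι F (2:Fin 5))
  | qrel : DAHArel F v w (FreeAlgebra.ι F (3:Fin 5) * FreeAlgebra.ι F (1:Fin 5) *
      FreeAlgebra.ι F (2:Fin 5) * FreeAlgebra.ι F (0:Fin 5) *
      FreeAlgebra.ι F (4:Fin 5) * FreeAlgebra.ι F (4:Fin 5) *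
      algebraMap F (FreeAlgebra F (Fin 5)) v) 1
  | hecke : DAHArel F v w
      ((FreeAlgebra.ι F (4:Fin 5) - algebraMap F (FreeAlgebra F (Fin 5)) w) *
       (FreeAlgebra.ι F (4:Fin 5) + algebraMap F (FreeAlgebra F (Fin 5)) w⁻¹)) 0

/-- The double affine Hecke algebra of type `A₁`. -/
abbrev DAHA (F : Type) [Field F] (v w : F) := RingQuot (DAHArel F v w)

/-- The images of the generators in the DAHA. -/
noncomputable def dahaGen (F : Type) [Field F] (v w : F) (i : Fin 5) : DAHA F v w :=
  RingQuot.mkAlgHom F (DAHArel F v w) (FreeAlgebra.ι F i)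

open MulOpposite

noncomputable section DAHAaux

variable (F : Type) [Field F] (v w : F)

/-- The involution on indices. -/
def dahaSigma : Fin 5 → Fin 5
  | 0 => 3
  | 1 => 2
  | 2 => 1
  | 3 => 0
  | 4 => 4

/-- lift to the opposite algebra. -/
def dahaF : FreeAlgebra F (Fin 5) →ₐ[F] (DAHA F v w)ᵐᵒᵖ :=
  FreeAlgebra.lift F (fun i => op (dahaGen F v w (dahaSigma i)))

lemma dahaF_ι (i : Fin 5) : dahaF F v w (FreeAlgebra.ι F i) = op (dahaGen F v w (dahaSigma i)) := by
  simp [dahaF]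

lemma sig0 : dahaSigma 0 = 3 := rfl
lemma sig1 : dahaSigma 1 = 2 := rfl
lemma sig2 : dahaSigma 2 = 1 := rfl
lemma sig3 : dahaSigma 3 = 0 := rfl
lemma sig4 : dahaSigma 4 = 4 := rfl

-- relation images in DAHA
lemma R01 : dahaGen F v w 0 * dahaGen F v w 1 = 1 := by
  simpa [dahaGen] using RingQuot.mkAlgHom_rel F (DAHArel.xxi (F := F) (v := v) (w := w))
lemma R10 : dahaGen F v w 1 * dahaGen F v w 0 = 1 := by
  simpa [dahaGen] using RingQuot.mkAlgHom_rel F (DAHArel.xix (F := F) (v := v) (w := w))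
lemma R23 : dahaGen F v w 2 * dahaGen F v w 3 = 1 := by
  simpa [dahaGen] using RingQuot.mkAlgHom_rel F (DAHArel.yyi (F := F) (v := v) (w := w))
lemma R32 : dahaGen F v w 3 * dahaGen F v w 2 = 1 := by
  simpa [dahaGen] using RingQuot.mkAlgHom_rel F (DAHArel.yiy (F := F) (v := v) (w := w))
lemma Rtxt : dahaGen F v w 4 * dahaGen F v w 0 * dahaGen F v w 4 = dahaGen F v w 1 := by
  simpa [dahaGen] using RingQuot.mkAlgHom_rel F (DAHArel.txt (F := F) (v := v) (w := w))
lemma Rtyt : dahaGen F v w 4 * dahaGen F v w 3 * dahaGen F v w 4 = dahaGen F v w 2 := by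
  simpa [dahaGen] using RingQuot.mkAlgHom_rel F (DAHArel.tyt (F := F) (v := v) (w := w))
lemma Rq : dahaGen F v w 3 * dahaGen F v w 1 * dahaGen F v w 2 * dahaGen F v w 0 *
    dahaGen F v w 4 * dahaGen F v w 4 * algebraMap F (DAHA F v w) v = 1 := by
  simpa [dahaGen] using RingQuot.mkAlgHom_rel F (DAHArel.qrel (F := F) (v := v) (w := w))
lemma Rh : (dahaGen F v w 4 - algebraMap F (DAHA F v w) w) *
    (dahaGen F v w 4 + algebraMap F (DAHA F v w) w⁻¹) = 0 := by
  simpa [dahaGen] using RingQuot.mkAlgHom_rel F (DAHArel.hecke (F := F) (v := v) (w := w))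

lemma inv_flip {M : Type*} [Monoid M] {a b e : M} (h1 : a * b = 1) (h2 : e * a = 1) :
    b * a = 1 := by
  have hb : b = e := by rw [← one_mul b, ← h2, mul_assoc, h1, mul_one]
  rw [hb, h2]

lemma dahaRel : ∀ x y, DAHArel F v w x y → dahaF F v w x = dahaF F v w y := by
  intro x y h
  have c23 : ∀ x : DAHA F v w, dahaGen F v w 2 * (dahaGen F v w 3 * x) = x := fun x => by
    rw [← mul_assoc, R23, one_mul]
  have c32 : ∀ x : DAHA F v w, dahaGen F v w 3 * (dahaGen F v w 2 * x) = x := fun x => by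
    rw [← mul_assoc, R32, one_mul]
  have c01 : ∀ x : DAHA F v w, dahaGen F v w 0 * (dahaGen F v w 1 * x) = x := fun x => by
    rw [← mul_assoc, R01, one_mul]
  have c10 : ∀ x : DAHA F v w, dahaGen F v w 1 * (dahaGen F v w 0 * x) = x := fun x => by
    rw [← mul_assoc, R10, one_mul]
  cases h with
  | xxi =>
      apply unop_injective
      simp only [map_mul, map_one, dahaF_ι, unop_mul, unop_op, unop_one, sig0, sig1, sig2, sig3, sig4]
      exact R23 F v w
  | xix =>
      apply unop_injective
      simp only [map_mul, map_one, dahaF_ι, unop_mul, unop_op, unop_one, sig0, sig1, sig2, sig3, sig4]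
      exact R32 F v w
  | yyi =>
      apply unop_injective
      simp only [map_mul, map_one, dahaF_ι, unop_mul, unop_op, unop_one, sig0, sig1, sig2, sig3, sig4]
      exact R01 F v w
  | yiy =>
      apply unop_injective
      simp only [map_mul, map_one, dahaF_ι, unop_mul, unop_op, unop_one, sig0, sig1, sig2, sig3, sig4]
      exact R10 F v w
  | txt =>
      apply unop_injective
      simp only [map_mul, dahaF_ι, unop_mul, unop_op, sig0, sig1, sig2, sig3, sig4]
      show dahaGen F v w 4 * (dahaGen F v w 3 * dahaGen F v w 4) = dahaGen F v w 2
      rw [← mul_assoc]; exact Rtyt F v w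
  | tyt =>
      apply unop_injective
      simp only [map_mul, dahaF_ι, unop_mul, unop_op, sig0, sig1, sig2, sig3, sig4]
      show dahaGen F v w 4 * (dahaGen F v w 0 * dahaGen F v w 4) = dahaGen F v w 1
      rw [← mul_assoc]; exact Rtxt F v w
  | qrel =>
      apply unop_injective
      simp only [map_mul, map_one, dahaF_ι, AlgHom.commutes, MulOpposite.algebraMap_apply,
        unop_mul, unop_op, unop_one, sig0, sig1, sig2, sig3, sig4]
      -- goal: algebraMap v * (g4 * (g4 * (g3 * (g1 * (g2 * g0))))) = 1  (up to assoc)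
      have ccomm : ∀ x y : DAHA F v w,
          algebraMap F (DAHA F v w) v * (x * y) = x * (algebraMap F (DAHA F v w) v * y) :=
        fun x y => by rw [← mul_assoc, Algebra.commutes, mul_assoc]
      set g0 := dahaGen F v w 0
      set g1 := dahaGen F v w 1
      set g2 := dahaGen F v w 2
      set g3 := dahaGen F v w 3
      set g4 := dahaGen F v w 4
      set c : DAHA F v w := algebraMap F (DAHA F v w) v with hc
      have hab : (g3 * g1 * g2 * g0) * (g4 * g4 * c) = 1 := by
        have := Rq F v w
        simp only [mul_assoc] at this ⊢
        exact this
      have hea : (g1 * (g3 * (g0 * g2))) * (g3 * g1 * g2 * g0) = 1 := by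
        simp only [mul_assoc]
        rw [c23, c01, c32, R10]
      have hba := inv_flip hab hea
      simp only [mul_assoc] at hba ⊢
      rw [ccomm, ccomm]
      exact hba
  | hecke =>
      apply unop_injective
      simp only [map_mul, map_sub, map_add, map_zero, dahaF_ι, AlgHom.commutes,
        MulOpposite.algebraMap_apply, unop_mul, unop_op, unop_sub, unop_add, unop_zero,
        sig0, sig1, sig2, sig3, sig4]
      set g4 := dahaGen F v w 4
      set cw : DAHA F v w := algebraMap F (DAHA F v w) w
      set cw' : DAHA F v w := algebraMap F (DAHA F v w) w⁻¹
      have comm : (g4 + cw') * (g4 - cw) = (g4 - cw) * (g4 + cw') := by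
        simp only [mul_add, add_mul, mul_sub, sub_mul]
        rw [Algebra.commutes w g4, Algebra.commutes w⁻¹ g4, ← map_mul, ← map_mul, mul_comm w⁻¹ w]
        abel
      rw [comm]
      exact Rh F v w

def dahaPhiAlg : DAHA F v w →ₐ[F] (DAHA F v w)ᵐᵒᵖ :=
  RingQuot.liftAlgHom F ⟨dahaF F v w, dahaRel F v w⟩

def dahaPhi : DAHA F v w → DAHA F v w := fun a => (dahaPhiAlg F v w a).unop

lemma dahaPhi_mk (x : FreeAlgebra F (Fin 5)) :
    dahaPhi F v w (RingQuot.mkAlgHom F (DAHArel F v w) x) = (dahaF F v w x).unop := by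
  simp [dahaPhi, dahaPhiAlg, RingQuot.liftAlgHom_mkAlgHom_apply]

lemma dahaPhi_gen (i : Fin 5) :
    dahaPhi F v w (dahaGen F v w i) = dahaGen F v w (dahaSigma i) := by
  rw [dahaGen, dahaPhi_mk, dahaF_ι, unop_op]

lemma dahaPhi_mul (a b : DAHA F v w) :
    dahaPhi F v w (a * b) = dahaPhi F v w b * dahaPhi F v w a := by
  simp [dahaPhi, map_mul]

lemma dahaPhi_add (a b : DAHA F v w) :
    dahaPhi F v w (a + b) = dahaPhi F v w a + dahaPhi F v w b := by
  simp [dahaPhi, map_add]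

lemma dahaPhi_smul (c : F) (a : DAHA F v w) :
    dahaPhi F v w (c • a) = c • dahaPhi F v w a := by
  simp [dahaPhi, map_smul]

lemma dahaPhi_one : dahaPhi F v w 1 = 1 := by simp [dahaPhi, map_one]

lemma dahaPhi_algebraMap (r : F) :
    dahaPhi F v w (algebraMap F (DAHA F v w) r) = algebraMap F (DAHA F v w) r := by
  simp [dahaPhi, AlgHom.commutes, MulOpposite.algebraMap_apply]

lemma dahaPhi_invol (a : DAHA F v w) : dahaPhi F v w (dahaPhi F v w a) = a := by
  obtain ⟨x, rfl⟩ := RingQuot.mkAlgHom_surjective F (DAHArel F v w) a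
  induction x using FreeAlgebra.induction with
  | grade0 r => rw [AlgHom.commutes, dahaPhi_algebraMap, dahaPhi_algebraMap]
  | grade1 i =>
      show dahaPhi F v w (dahaPhi F v w (dahaGen F v w i)) = dahaGen F v w i
      rw [dahaPhi_gen, dahaPhi_gen]
      congr 1
      fin_cases i <;> simp [dahaSigma]
  | mul a b ha hb => rw [map_mul, dahaPhi_mul, dahaPhi_mul, ha, hb]
  | add a b ha hb => rw [map_add, dahaPhi_add, dahaPhi_add, ha, hb]

end DAHAaux

/-- In the double affine Hecke algebra of type `A₁`, the assignment
`φ(X) = Y⁻¹`, `φ(Y) = X⁻¹`, `φ(T) = T`, `φ(q) = q`, `φ(t) = t` extends to an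
anti-involution of the algebra (an `F`-linear, multiplication-reversing involution). -/
theorem daha_anti_involution_phi (F : Type) [Field F] (v w : F)
    (hv : v ≠ 0) (hw : w ≠ 0) :
    ∃ φ : DAHA F v w → DAHA F v w,
      (∀ a b : DAHA F v w, φ (a * b) = φ b * φ a) ∧
      (∀ a b : DAHA F v w, φ (a + b) = φ a + φ b) ∧
      (∀ (c : F) (a : DAHA F v w), φ (c • a) = c • φ a) ∧
      φ 1 = 1 ∧
      (∀ a : DAHA F v w, φ (φ a) = a) ∧
      φ (dahaGen F v w 0) = dahaGen F v w 3 ∧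
      φ (dahaGen F v w 2) = dahaGen F v w 1 ∧
      φ (dahaGen F v w 4) = dahaGen F v w 4 := by
  refine ⟨dahaPhi F v w, dahaPhi_mul F v w, dahaPhi_add F v w, dahaPhi_smul F v w,
    dahaPhi_one F v w, dahaPhi_invol F v w, ?_, ?_, ?_⟩ <;>
    rw [dahaPhi_gen] <;> simp [dahaSigma]
end
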